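/- arXiv:2101.08908 — 7 statements merged into one kernel-verified Lean document; each statement's English description precedes it below -/
import Mathlib

section
/- For every iteration index ν ≥ 0, every d ∈ {0,…,N−1}, and all natural numbers Δ₁ > Δ₂, the relative value iteration iterates satisfy V_ν(d,Δ₁) > V_ν(d,Δ₂); that is, each estimated value function V_ν is strictly increasing in the age coordinate Δ. -/
/-- Transition weights of the source mismatch chain:
`P d d = 1 - 2p` for `0 ≤ d ≤ N-1`; `P d (d±1) = p` for `1 ≤ d ≤ N-2`;
`P 0 1 = 2p`, `P (N-1) (N-2) = 2p`; all other entries `0`. -/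
noncomputable def Pw (N : ℕ) (p : ℝ) (d d' : ℕ) : ℝ :=
  if d' = d then 1 - 2 * p
  else if d = 0 ∧ d' = 1 then 2 * p
  else if d = N - 1 ∧ d' = N - 2 then 2 * p
  else if 1 ≤ d ∧ d ≤ N - 2 ∧ (d' = d + 1 ∨ d' + 1 = d) then p
  else 0

/-- `S[V](d,Δ) = Σ_{d'=0}^{N-1} P_{d,d'} · V(d', Δ'(d'))` where
`Δ'(d') = 0` if `d' = 0` and `Δ'(d') = Δ + d'` otherwise. -/
noncomputable def Ssum (N : ℕ) (p : ℝ) (V : ℕ × ℕ → ℝ) (d Δ : ℕ) : ℝ :=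
  ∑ d' ∈ Finset.range N, Pw N p d d' * V (d', if d' = 0 then 0 else Δ + d')

/-- `V⁰_{ν+1}(d,Δ) = Δ + S[V_ν](d,Δ)` (value of idling). -/
noncomputable def Vact0 (N : ℕ) (p : ℝ) (V : ℕ × ℕ → ℝ) (d Δ : ℕ) : ℝ :=
  (Δ : ℝ) + Ssum N p V d Δ

/-- `V¹_{ν+1}(d,Δ) = Δ + λ + p_s((1-2p)V_ν(0,0) + 2p V_ν(1,1)) + p_f S[V_ν](d,Δ)`
(value of transmitting), with `p_f = 1 - p_s`. -/
noncomputable def Vact1 (N : ℕ) (p ps lam : ℝ) (V : ℕ × ℕ → ℝ) (d Δ : ℕ) : ℝ :=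
  (Δ : ℝ) + lam + ps * ((1 - 2 * p) * V (0, 0) + 2 * p * V (1, 1))
    + (1 - ps) * Ssum N p V d Δ

/-- Interim value `Q_{ν+1}(d,Δ) = min{V⁰_{ν+1}(d,Δ), V¹_{ν+1}(d,Δ)}`. -/
noncomputable def Qit (N : ℕ) (p ps lam : ℝ) (V : ℕ × ℕ → ℝ) (d Δ : ℕ) : ℝ :=
  min (Vact0 N p V d Δ) (Vact1 N p ps lam V d Δ)

/-- The relative value iteration sequence:
`V_0(d,Δ) = Δ` and `V_{ν+1}(x) = Q_{ν+1}(x) - Q_{ν+1}(0,0)`. -/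
noncomputable def Vit (N : ℕ) (p ps lam : ℝ) : ℕ → ℕ × ℕ → ℝ
  | 0 => fun x => (x.2 : ℝ)
  | ν + 1 => fun x =>
      Qit N p ps lam (Vit N p ps lam ν) x.1 x.2
        - Qit N p ps lam (Vit N p ps lam ν) 0 0

/-- `δV_ν(d,Δ) = V¹_ν(d,Δ) - V⁰_ν(d,Δ)` (for `ν ≥ 1`, built from `V_{ν-1}`). -/
noncomputable def dV (N : ℕ) (p ps lam : ℝ) (ν : ℕ) (d Δ : ℕ) : ℝ :=
  Vact1 N p ps lam (Vit N p ps lam (ν - 1)) d Δ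
    - Vact0 N p (Vit N p ps lam (ν - 1)) d Δ

lemma Pw_nonneg (N : ℕ) (p : ℝ) (hp0 : 0 ≤ p) (hp1 : p ≤ 1 / 3) (d d' : ℕ) :
    0 ≤ Pw N p d d' := by
  unfold Pw; split_ifs <;> linarith

lemma Ssum_mono (N : ℕ) (p : ℝ) (hp0 : 0 ≤ p) (hp1 : p ≤ 1 / 3)
    (V : ℕ × ℕ → ℝ) (hV : ∀ d' a b, d' < N → a ≤ b → V (d', a) ≤ V (d', b))
    (d Δ₁ Δ₂ : ℕ) (hΔ : Δ₂ ≤ Δ₁) :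
    Ssum N p V d Δ₂ ≤ Ssum N p V d Δ₁ := by
  unfold Ssum
  apply Finset.sum_le_sum
  intro d' hd'
  rw [Finset.mem_range] at hd'
  by_cases h0 : d' = 0
  · simp [h0]
  · simp only [h0, if_false]
    exact mul_le_mul_of_nonneg_left
      (hV d' (Δ₂ + d') (Δ₁ + d') hd' (by omega)) (Pw_nonneg N p hp0 hp1 d d')

/-- for every iteration `ν ≥ 0`, every `d ∈ {0,…,N-1}` and all `Δ₁ > Δ₂`,
the RVI iterates satisfy `V_ν(d,Δ₁) > V_ν(d,Δ₂)`. -/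
theorem Vit_strictMono_in_age
    (N : ℕ) (p ps lam : ℝ)
    (hN : 2 ≤ N) (hp0 : 0 ≤ p) (hp1 : p ≤ 1 / 3)
    (hps0 : 0 < ps) (hps1 : ps ≤ 1) (hlam : 0 ≤ lam)
    (ν d Δ₁ Δ₂ : ℕ) (hd : d ≤ N - 1) (hΔ : Δ₂ < Δ₁) :
    Vit N p ps lam ν (d, Δ₂) < Vit N p ps lam ν (d, Δ₁) := by
  induction ν generalizing d Δ₁ Δ₂ with
  | zero => simpa [Vit] using (Nat.cast_lt (α := ℝ)).2 hΔ
  | succ ν ih =>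
    have hweak : ∀ d' a b, d' < N → a ≤ b → Vit N p ps lam ν (d', a) ≤ Vit N p ps lam ν (d', b) := by
      intro d' a b hd' hab
      rcases lt_or_eq_of_le hab with h | h
      · exact le_of_lt (ih d' b a (by omega) h)
      · rw [h]
    have hS := Ssum_mono N p hp0 hp1 (Vit N p ps lam ν) hweak d Δ₁ Δ₂ (le_of_lt hΔ)
    have hcast : (Δ₂ : ℝ) < Δ₁ := Nat.cast_lt.2 hΔ
    have h0 : Vact0 N p (Vit N p ps lam ν) d Δ₂ < Vact0 N p (Vit N p ps lam ν) d Δ₁ := by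
      unfold Vact0; linarith
    have h1 : Vact1 N p ps lam (Vit N p ps lam ν) d Δ₂
        < Vact1 N p ps lam (Vit N p ps lam ν) d Δ₁ := by
      unfold Vact1
      have : (1 - ps) * Ssum N p (Vit N p ps lam ν) d Δ₂
          ≤ (1 - ps) * Ssum N p (Vit N p ps lam ν) d Δ₁ :=
        mul_le_mul_of_nonneg_left hS (by linarith)
      linarith
    show Qit N p ps lam (Vit N p ps lam ν) d Δ₂ - _ < Qit N p ps lam (Vit N p ps lam ν) d Δ₁ - _
    have := min_lt_min h0 h1
    unfold Qit
    linarith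
end

section
/- For every iteration index ν ≥ 0, every d ∈ {1,…,N−1}, and every Δ ≥ 1, the relative value iteration iterates satisfy V_ν(d,Δ) > V_ν(0,0); that is, the reference state (0,0) has the strictly smallest estimated value among all states with d ≥ 1 and Δ ≥ 1, at every iteration. -/
namespace RviAux

/-- value at neighbor `j`, with the Δ-reset convention -/
noncomputable def vv (V : ℕ × ℕ → ℝ) (Δ j : ℕ) : ℝ := V (j, if j = 0 then 0 else Δ + j)

lemma Pw_nonneg {N : ℕ} {p : ℝ} (hp0 : 0 ≤ p) (hp1 : p ≤ 1/3) (d d' : ℕ) :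
    0 ≤ Pw N p d d' := by
  unfold Pw; split_ifs <;> linarith

lemma Pw_self (N : ℕ) (p : ℝ) (d : ℕ) : Pw N p d d = 1 - 2*p := by
  unfold Pw; rw [if_pos rfl]

lemma Pw_left {N d : ℕ} (p : ℝ) (h1 : 1 ≤ d) (h2 : d ≤ N - 2) :
    Pw N p d (d-1) = p := by
  unfold Pw
  rw [if_neg (by omega), if_neg (by omega), if_neg (by omega), if_pos (by omega)]

lemma Pw_right {N d : ℕ} (p : ℝ) (h1 : 1 ≤ d) (h2 : d ≤ N - 2) :
    Pw N p d (d+1) = p := by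
  unfold Pw
  rw [if_neg (by omega), if_neg (by omega), if_neg (by omega), if_pos (by omega)]

lemma Pw_top {N : ℕ} (p : ℝ) (hN : 2 ≤ N) : Pw N p (N-1) (N-2) = 2*p := by
  unfold Pw
  rw [if_neg (by omega), if_neg (by omega), if_pos (by omega)]

lemma Pw_zero_one {N : ℕ} (p : ℝ) (hN : 2 ≤ N) : Pw N p 0 1 = 2*p := by
  unfold Pw
  rw [if_neg (by omega), if_pos (by omega)]

lemma Pw_int_zero {N d d' : ℕ} (p : ℝ) (h1 : 1 ≤ d) (h2 : d ≤ N - 2)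
    (ha : d' ≠ d - 1) (hb : d' ≠ d) (hc : d' ≠ d + 1) : Pw N p d d' = 0 := by
  unfold Pw
  rw [if_neg (by omega), if_neg (by omega), if_neg (by omega), if_neg (by omega)]

lemma Pw_top_zero {N d' : ℕ} (p : ℝ) (hN : 2 ≤ N)
    (ha : d' ≠ N - 2) (hb : d' ≠ N - 1) : Pw N p (N-1) d' = 0 := by
  unfold Pw
  rw [if_neg (by omega), if_neg (by omega), if_neg (by omega), if_neg (by omega)]

lemma Pw_zero_zero {N d' : ℕ} (p : ℝ) (hN : 2 ≤ N)
    (ha : d' ≠ 0) (hb : d' ≠ 1) : Pw N p 0 d' = 0 := by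
  unfold Pw
  rw [if_neg (by omega), if_neg (by omega), if_neg (by omega), if_neg (by omega)]

lemma Ssum_int {N : ℕ} {p : ℝ} (V : ℕ × ℕ → ℝ) (d Δ : ℕ) (h1 : 1 ≤ d) (h2 : d ≤ N - 2) :
    Ssum N p V d Δ = p * vv V Δ (d-1) + (1 - 2*p) * vv V Δ d + p * vv V Δ (d+1) := by
  have hsub : ({d-1, d, d+1} : Finset ℕ) ⊆ Finset.range N := by
    intro x hx
    simp only [Finset.mem_insert, Finset.mem_singleton] at hx
    simp only [Finset.mem_range]; omega
  have hz : ∀ x ∈ Finset.range N, x ∉ ({d-1, d, d+1} : Finset ℕ) →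
      Pw N p d x * V (x, if x = 0 then 0 else Δ + x) = 0 := by
    intro x _ hx
    simp only [Finset.mem_insert, Finset.mem_singleton, not_or] at hx
    rw [Pw_int_zero p h1 h2 hx.1 hx.2.1 hx.2.2, zero_mul]
  have := (Finset.sum_subset hsub hz).symm
  unfold Ssum
  rw [this]
  rw [Finset.sum_insert (by simp only [Finset.mem_insert, Finset.mem_singleton]; omega),
      Finset.sum_insert (by simp only [Finset.mem_singleton]; omega),
      Finset.sum_singleton, Pw_left p h1 h2, Pw_self, Pw_right p h1 h2]
  unfold vv; ring

lemma Ssum_top {N : ℕ} {p : ℝ} (V : ℕ × ℕ → ℝ) (Δ : ℕ) (hN : 2 ≤ N) :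
    Ssum N p V (N-1) Δ = 2*p * vv V Δ (N-2) + (1 - 2*p) * vv V Δ (N-1) := by
  have hsub : ({N-2, N-1} : Finset ℕ) ⊆ Finset.range N := by
    intro x hx
    simp only [Finset.mem_insert, Finset.mem_singleton] at hx
    simp only [Finset.mem_range]; omega
  have hz : ∀ x ∈ Finset.range N, x ∉ ({N-2, N-1} : Finset ℕ) →
      Pw N p (N-1) x * V (x, if x = 0 then 0 else Δ + x) = 0 := by
    intro x _ hx
    simp only [Finset.mem_insert, Finset.mem_singleton, not_or] at hx
    rw [Pw_top_zero p hN hx.1 hx.2, zero_mul]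
  have := (Finset.sum_subset hsub hz).symm
  unfold Ssum
  rw [this]
  rw [Finset.sum_insert (by simp only [Finset.mem_singleton]; omega),
      Finset.sum_singleton, Pw_top p hN, Pw_self]
  unfold vv; ring

lemma Ssum_zero {N : ℕ} {p : ℝ} (V : ℕ × ℕ → ℝ) (Δ : ℕ) (hN : 2 ≤ N) :
    Ssum N p V 0 Δ = (1 - 2*p) * V (0, 0) + 2*p * V (1, Δ + 1) := by
  have hsub : ({0, 1} : Finset ℕ) ⊆ Finset.range N := by
    intro x hx
    simp only [Finset.mem_insert, Finset.mem_singleton] at hx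
    simp only [Finset.mem_range]; omega
  have hz : ∀ x ∈ Finset.range N, x ∉ ({0, 1} : Finset ℕ) →
      Pw N p 0 x * V (x, if x = 0 then 0 else Δ + x) = 0 := by
    intro x _ hx
    simp only [Finset.mem_insert, Finset.mem_singleton, not_or] at hx
    rw [Pw_zero_zero p hN hx.1 hx.2, zero_mul]
  have := (Finset.sum_subset hsub hz).symm
  unfold Ssum
  rw [this]
  rw [Finset.sum_insert (by simp only [Finset.mem_singleton]; omega),
      Finset.sum_singleton, Pw_self, Pw_zero_one p hN]
  norm_num

/-- The invariants carried through the induction. -/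
def GoodV (N : ℕ) (p : ℝ) (V : ℕ × ℕ → ℝ) : Prop :=
  V (0, 0) = 0 ∧
  (∀ d Δ : ℕ, 1 ≤ d → d ≤ N - 1 → 1 ≤ Δ → 0 < V (d, Δ)) ∧
  (∀ d Δ k : ℕ, 1 ≤ d → d ≤ N - 1 → 1 ≤ Δ → V (d, Δ) + (k : ℝ) ≤ V (d, Δ + k)) ∧
  (∀ d d' Δ Δ' : ℕ, 1 ≤ d → d ≤ d' → d' ≤ N - 1 → 1 ≤ Δ → Δ ≤ Δ' →
      V (d, Δ) ≤ V (d', Δ')) ∧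
  (N = 2 → 1/4 < p → ∀ Δ k : ℕ, 1 ≤ Δ → V (1, Δ + k) ≤ V (1, Δ) + (k : ℝ)/(2*p)) ∧
  (N = 2 → 1/4 < p → V (1, 1) ≤ 1/(2*p))

lemma good_zero {N : ℕ} {p : ℝ} (hp0 : 0 ≤ p) (hp1 : p ≤ 1/3) :
    GoodV N p (fun x => (x.2 : ℝ)) := by
  refine ⟨by norm_num, ?_, ?_, ?_, ?_, ?_⟩
  · intro d Δ _ _ hΔ; exact Nat.cast_pos.mpr hΔ
  · intro d Δ k _ _ _; simp only; push_cast; linarith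
  · intro d d' Δ Δ' _ _ _ _ h; exact Nat.cast_le.mpr h
  · intro hN2 hp4 Δ k _
    simp only
    push_cast
    have hk : (0:ℝ) ≤ k := Nat.cast_nonneg k
    have : (k:ℝ) ≤ (k:ℝ)/(2*p) := by
      rw [le_div_iff₀ (by linarith)]
      nlinarith
    linarith
  · intro hN2 hp4
    simp only [Nat.cast_one]
    rw [le_div_iff₀ (by linarith)]
    nlinarith

end RviAux
namespace RviAux

lemma min_shift_le {a b a' b' M : ℝ} (h1 : a' ≤ a + M) (h2 : b' ≤ b + M) :
    min a' b' ≤ min a b + M := by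
  rcases le_total a b with h | h
  · rw [min_eq_left h]; exact (min_le_left a' b').trans h1
  · rw [min_eq_right h]; exact (min_le_right a' b').trans h2

lemma le_min_shift {a b a' b' M : ℝ} (h1 : a + M ≤ a') (h2 : b + M ≤ b') :
    min a b + M ≤ min a' b' := by
  refine le_min ?_ ?_
  · linarith [min_le_left a b]
  · linarith [min_le_right a b]

lemma good_step (N : ℕ) (p ps lam : ℝ)
    (hN : 2 ≤ N) (hp0 : 0 ≤ p) (hp1 : p ≤ 1 / 3)
    (hps0 : 0 < ps) (hps1 : ps ≤ 1) (hlam : 0 ≤ lam)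
    (V : ℕ × ℕ → ℝ) (hV : GoodV N p V) :
    GoodV N p (fun x => Qit N p ps lam V x.1 x.2 - Qit N p ps lam V 0 0) := by
  obtain ⟨h00, hP, hA, hM, hU, hB⟩ := hV
  have hm : 0 < V (1, 1) := hP 1 1 le_rfl (by omega) le_rfl
  have hCC : (1 - 2 * p) * V (0, 0) + 2 * p * V (1, 1) = 2 * p * V (1, 1) := by
    rw [h00]; ring
  have hΔcast : ∀ {Δ : ℕ}, 1 ≤ Δ → (1:ℝ) ≤ (Δ:ℝ) := fun h => by exact_mod_cast h
  -- the reference value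
  have hS0 : Ssum N p V 0 0 = 2 * p * V (1, 1) := by
    rw [Ssum_zero V 0 hN, h00]; norm_num
  have hQ00 : Qit N p ps lam V 0 0 = 2 * p * V (1, 1) := by
    unfold Qit Vact0 Vact1
    rw [hS0, hCC, Nat.cast_zero]
    rw [min_eq_left (by linarith)]
    ring
  -- vv facts
  have hvv0 : ∀ Δ : ℕ, vv V Δ 0 = 0 := by intro Δ; simpa [vv] using h00
  have hvvE : ∀ Δ j : ℕ, 1 ≤ j → vv V Δ j = V (j, Δ + j) := by
    intro Δ j hj; unfold vv; rw [if_neg (by omega)]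
  have hvvge : ∀ Δ j : ℕ, 1 ≤ Δ → 1 ≤ j → j ≤ N - 1 →
      V (1, 1) + (Δ:ℝ) ≤ vv V Δ j := by
    intro Δ j hΔ hj1 hj2
    rw [hvvE Δ j hj1]
    have h1 : V (1, 1) + (Δ:ℝ) ≤ V (1, 1 + Δ) := hA 1 1 Δ le_rfl (by omega) le_rfl
    have h2 : V (1, 1 + Δ) ≤ V (j, Δ + j) :=
      hM 1 j (1 + Δ) (Δ + j) le_rfl hj1 hj2 (by omega) (by omega)
    linarith
  have hvvnn : ∀ Δ j : ℕ, 1 ≤ Δ → j ≤ N - 1 → 0 ≤ vv V Δ j := by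
    intro Δ j hΔ hj
    rcases Nat.eq_zero_or_pos j with rfl | hj1
    · rw [hvv0]
    · have h1 := hvvge Δ j hΔ hj1 hj
      have h2 := hΔcast hΔ
      linarith
  have hvvmono : ∀ Δ j j' : ℕ, 1 ≤ Δ → j ≤ j' → j' ≤ N - 1 →
      vv V Δ j ≤ vv V Δ j' := by
    intro Δ j j' hΔ hjj hj'
    rcases Nat.eq_zero_or_pos j with rfl | hj1
    · rw [hvv0]; exact hvvnn Δ j' hΔ hj'
    · rw [hvvE Δ j hj1, hvvE Δ j' (le_trans hj1 hjj)]
      exact hM j j' (Δ + j) (Δ + j') hj1 hjj hj' (by omega) (by omega)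
  have hvvmonoD : ∀ Δ Δ' j : ℕ, 1 ≤ Δ → Δ ≤ Δ' → j ≤ N - 1 →
      vv V Δ j ≤ vv V Δ' j := by
    intro Δ Δ' j hΔ hΔΔ hj
    rcases Nat.eq_zero_or_pos j with rfl | hj1
    · rw [hvv0, hvv0]
    · rw [hvvE Δ j hj1, hvvE Δ' j hj1]
      exact hM j j (Δ + j) (Δ' + j) hj1 le_rfl hj (by omega) (by omega)
  -- monotonicity of Ssum in Δ
  have hSD : ∀ d Δ Δ' : ℕ, 1 ≤ Δ → Δ ≤ Δ' → Ssum N p V d Δ ≤ Ssum N p V d Δ' := by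
    intro d Δ Δ' hΔ hΔΔ
    unfold Ssum
    apply Finset.sum_le_sum
    intro i hi
    have hiN : i ≤ N - 1 := by have := Finset.mem_range.mp hi; omega
    have hle : V (i, if i = 0 then 0 else Δ + i) ≤ V (i, if i = 0 then 0 else Δ' + i) :=
      hvvmonoD Δ Δ' i hΔ hΔΔ hiN
    exact mul_le_mul_of_nonneg_left hle (Pw_nonneg hp0 hp1 d i)
  -- monotonicity of Ssum in d
  have hSd_succ : ∀ Δ e : ℕ, 1 ≤ Δ → 1 ≤ e → e + 1 ≤ N - 1 →
      Ssum N p V e Δ ≤ Ssum N p V (e + 1) Δ := by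
    intro Δ e hΔ he1 he2
    have ha1 : vv V Δ (e - 1) ≤ vv V Δ e := hvvmono Δ (e - 1) e hΔ (by omega) (by omega)
    have ha2 : vv V Δ e ≤ vv V Δ (e + 1) := hvvmono Δ e (e + 1) hΔ (by omega) (by omega)
    by_cases hc : e + 1 ≤ N - 2
    · have ha3 : vv V Δ (e + 1) ≤ vv V Δ (e + 2) :=
        hvvmono Δ (e + 1) (e + 2) hΔ (by omega) (by omega)
      rw [Ssum_int V e Δ he1 (by omega), Ssum_int V (e + 1) Δ (by omega) hc,
        show e + 1 - 1 = e from by omega, show e + 1 + 1 = e + 2 from by omega]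
      linarith [mul_le_mul_of_nonneg_left ha1 hp0,
        mul_le_mul_of_nonneg_left ha2 hp0,
        mul_le_mul_of_nonneg_left ha3 hp0,
        mul_le_mul_of_nonneg_left ha2 (by linarith : (0:ℝ) ≤ 1 - 3 * p)]
    · have htop : Ssum N p V (N - 1) Δ
          = 2 * p * vv V Δ (N - 2) + (1 - 2 * p) * vv V Δ (N - 1) := Ssum_top V Δ hN
      rw [show N - 2 = e from by omega] at htop
      rw [show N - 1 = e + 1 from by omega] at htop
      rw [Ssum_int V e Δ he1 (by omega), htop]
      linarith [mul_le_mul_of_nonneg_left ha1 hp0,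
        mul_le_mul_of_nonneg_left ha2 (by linarith : (0:ℝ) ≤ 1 - 3 * p)]
  have hSd : ∀ Δ d e : ℕ, 1 ≤ Δ → 1 ≤ d → d ≤ e → e ≤ N - 1 →
      Ssum N p V d Δ ≤ Ssum N p V e Δ := by
    intro Δ d e hΔ hd1 hde
    induction e, hde using Nat.le_induction with
    | base => intro _; exact le_rfl
    | succ e hde ih =>
      intro he
      exact le_trans (ih (by omega)) (hSd_succ Δ e hΔ (by omega) he)
  -- key strict lower bound on `Δ + S`
  have key : ∀ d Δ : ℕ, 1 ≤ d → d ≤ N - 1 → 1 ≤ Δ →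
      2 * p * V (1, 1) < (Δ:ℝ) + Ssum N p V d Δ := by
    intro d Δ hd1 hd2 hΔ
    have hΔR : (1:ℝ) ≤ (Δ:ℝ) := hΔcast hΔ
    by_cases hdN : d ≤ N - 2
    · rw [Ssum_int V d Δ hd1 hdN]
      have h3 := hvvge Δ d hΔ hd1 (by omega)
      have h4 := hvvge Δ (d + 1) hΔ (by omega) (by omega)
      have h5 := hvvnn Δ (d - 1) hΔ (by omega)
      linarith [mul_le_mul_of_nonneg_left h3 (by linarith : (0:ℝ) ≤ 1 - 2 * p),
        mul_le_mul_of_nonneg_left h4 hp0,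
        mul_le_mul_of_nonneg_left h5 hp0, hm, hΔR,
        mul_nonneg (by linarith : (0:ℝ) ≤ 1 - 3 * p) hm.le,
        mul_le_mul_of_nonneg_right hp1 (by positivity : (0:ℝ) ≤ (Δ:ℝ))]
    · have hdEq : d = N - 1 := by omega
      by_cases hN2 : N = 2
      · subst hN2
        have hd : d = 1 := by omega
        subst hd
        have htop : Ssum 2 p V 1 Δ = (1 - 2 * p) * V (1, Δ + 1) := by
          have h := Ssum_top (p := p) V Δ (le_refl 2)
          rw [show (2:ℕ) - 1 = 1 from rfl, show (2:ℕ) - 2 = 0 from rfl] at h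
          rw [h, hvv0, hvvE Δ 1 le_rfl]; ring
        rw [htop]
        have h3 : V (1, 1) + (Δ:ℝ) ≤ V (1, Δ + 1) := by
          have h := hvvge Δ 1 hΔ le_rfl (by omega)
          rwa [hvvE Δ 1 le_rfl] at h
        by_cases hp4 : p ≤ 1/4
        · linarith [mul_le_mul_of_nonneg_left h3 (by linarith : (0:ℝ) ≤ 1 - 2 * p),
            mul_nonneg (by linarith : (0:ℝ) ≤ 1 - 4 * p) hm.le, hΔR,
            mul_le_mul_of_nonneg_right hp1 (by positivity : (0:ℝ) ≤ (Δ:ℝ))]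
        · have hb := hB rfl (by linarith)
          have h2pm : 2 * p * V (1, 1) ≤ 1 := by
            have := (le_div_iff₀ (by linarith : (0:ℝ) < 2 * p)).mp hb
            linarith
          have hpos : (0:ℝ) < V (1, Δ + 1) := by linarith
          linarith [mul_pos (show (0:ℝ) < 1 - 2 * p by linarith) hpos]
      · rw [hdEq, Ssum_top V Δ hN]
        have h2 := hvvge Δ (N - 2) hΔ (by omega) (by omega)
        have h3 := hvvge Δ (N - 1) hΔ (by omega) (by omega)
        linarith [mul_le_mul_of_nonneg_left h2 (by linarith : (0:ℝ) ≤ 2 * p),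
          mul_le_mul_of_nonneg_left h3 (by linarith : (0:ℝ) ≤ 1 - 2 * p), hm, hΔR,
          mul_nonneg (by linarith : (0:ℝ) ≤ 1 - 2 * p) hm.le]
  -- key strict lower bound on Q
  have keyQ : ∀ d Δ : ℕ, 1 ≤ d → d ≤ N - 1 → 1 ≤ Δ →
      2 * p * V (1, 1) < Qit N p ps lam V d Δ := by
    intro d Δ hd1 hd2 hΔ
    have hk := key d Δ hd1 hd2 hΔ
    have hΔR : (1:ℝ) ≤ (Δ:ℝ) := hΔcast hΔ
    unfold Qit Vact0 Vact1
    rw [hCC]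
    refine lt_min hk ?_
    have hS : 2 * p * V (1, 1) - (Δ:ℝ) < Ssum N p V d Δ := by linarith
    linarith [mul_le_mul_of_nonneg_left hS.le (by linarith : (0:ℝ) ≤ 1 - ps),
      mul_le_mul_of_nonneg_left hΔR hps0.le]
  -- assemble
  refine ⟨?_, ?_, ?_, ?_, ?_, ?_⟩
  · exact sub_self _
  · intro d Δ hd1 hd2 hΔ
    show (0:ℝ) < Qit N p ps lam V d Δ - Qit N p ps lam V 0 0
    rw [hQ00]
    have := keyQ d Δ hd1 hd2 hΔ
    linarith
  · intro d Δ k hd1 hd2 hΔ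
    show Qit N p ps lam V d Δ - Qit N p ps lam V 0 0 + (k:ℝ)
        ≤ Qit N p ps lam V d (Δ + k) - Qit N p ps lam V 0 0
    have hS := hSD d Δ (Δ + k) hΔ (by omega)
    have hmain : Qit N p ps lam V d Δ + (k:ℝ) ≤ Qit N p ps lam V d (Δ + k) := by
      unfold Qit Vact0 Vact1
      apply le_min_shift
      · push_cast; linarith
      · push_cast
        have h2 : (1 - ps) * Ssum N p V d Δ ≤ (1 - ps) * Ssum N p V d (Δ + k) :=
          mul_le_mul_of_nonneg_left hS (by linarith)
        linarith
    linarith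
  · intro d d' Δ Δ' hd1 hdd hd' hΔ hΔΔ
    show Qit N p ps lam V d Δ - Qit N p ps lam V 0 0
        ≤ Qit N p ps lam V d' Δ' - Qit N p ps lam V 0 0
    have hS : Ssum N p V d Δ ≤ Ssum N p V d' Δ' :=
      le_trans (hSD d Δ Δ' hΔ hΔΔ) (hSd Δ' d d' (by omega) hd1 hdd hd')
    have hDD : (Δ:ℝ) ≤ (Δ':ℝ) := Nat.cast_le.mpr hΔΔ
    have hmain : Qit N p ps lam V d Δ ≤ Qit N p ps lam V d' Δ' := by
      unfold Qit Vact0 Vact1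
      apply min_le_min
      · linarith
      · have h2 : (1 - ps) * Ssum N p V d Δ ≤ (1 - ps) * Ssum N p V d' Δ' :=
          mul_le_mul_of_nonneg_left hS (by linarith)
        linarith
    linarith
  · intro hN2 hp4 Δ k hΔ
    subst hN2
    show Qit 2 p ps lam V 1 (Δ + k) - Qit 2 p ps lam V 0 0
        ≤ Qit 2 p ps lam V 1 Δ - Qit 2 p ps lam V 0 0 + (k:ℝ)/(2*p)
    have hsform : ∀ D : ℕ, Ssum 2 p V 1 D = (1 - 2 * p) * V (1, D + 1) := by
      intro D
      have h := Ssum_top (p := p) V D (le_refl 2)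
      rw [show (2:ℕ) - 1 = 1 from rfl, show (2:ℕ) - 2 = 0 from rfl] at h
      rw [h, hvv0, hvvE D 1 le_rfl]; ring
    have h1p : (0:ℝ) ≤ 1 - 2 * p := by linarith
    have hud : V (1, Δ + k + 1) ≤ V (1, Δ + 1) + (k:ℝ)/(2*p) := by
      have h := hU rfl hp4 (Δ + 1) k (by omega)
      rwa [show Δ + 1 + k = Δ + k + 1 from by omega] at h
    have hlow : V (1, Δ + 1) ≤ V (1, Δ + k + 1) := by
      have h := hA 1 (Δ + 1) k le_rfl (by norm_num) (by omega)
      rw [show Δ + 1 + k = Δ + k + 1 from by omega] at h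
      have hk0 : (0:ℝ) ≤ (k:ℝ) := Nat.cast_nonneg k
      linarith
    have hkey : (k:ℝ) + (1 - 2 * p) * ((k:ℝ)/(2*p)) = (k:ℝ)/(2*p) := by
      field_simp; ring
    have hmain : Qit 2 p ps lam V 1 (Δ + k) ≤ Qit 2 p ps lam V 1 Δ + (k:ℝ)/(2*p) := by
      unfold Qit Vact0 Vact1
      rw [hsform, hsform]
      apply min_shift_le
      · push_cast
        have h := mul_le_mul_of_nonneg_left hud h1p
        rw [mul_add] at h
        linarith
      · push_cast
        have hdiff : (0:ℝ) ≤ V (1, Δ + k + 1) - V (1, Δ + 1) := by linarith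
        have e1 : (1 - ps) * ((1 - 2*p) * V (1, Δ + k + 1))
            - (1 - ps) * ((1 - 2*p) * V (1, Δ + 1))
            = (1 - ps) * ((1 - 2*p) * (V (1, Δ + k + 1) - V (1, Δ + 1))) := by ring
        have e2 : (1 - ps) * ((1 - 2*p) * (V (1, Δ + k + 1) - V (1, Δ + 1)))
            ≤ 1 * ((1 - 2*p) * (V (1, Δ + k + 1) - V (1, Δ + 1))) :=
          mul_le_mul_of_nonneg_right (by linarith) (mul_nonneg h1p hdiff)
        have e3 : (1 - 2*p) * (V (1, Δ + k + 1) - V (1, Δ + 1))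
            ≤ (1 - 2*p) * ((k:ℝ)/(2*p)) :=
          mul_le_mul_of_nonneg_left (by linarith) h1p
        linarith [e1, e2, e3, hkey]
    linarith
  · intro hN2 hp4
    subst hN2
    show Qit 2 p ps lam V 1 1 - Qit 2 p ps lam V 0 0 ≤ 1/(2*p)
    rw [hQ00]
    have hsf : Ssum 2 p V 1 1 = (1 - 2 * p) * V (1, 2) := by
      have h := Ssum_top (p := p) V 1 (le_refl 2)
      rw [show (2:ℕ) - 1 = 1 from rfl, show (2:ℕ) - 2 = 0 from rfl] at h
      rw [h, hvv0, hvvE 1 1 le_rfl]; ring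
    have hq : Qit 2 p ps lam V 1 1 ≤ 1 + (1 - 2 * p) * V (1, 2) := by
      unfold Qit Vact0
      refine le_trans (min_le_left _ _) ?_
      rw [hsf]; norm_num
    have hu2 : V (1, 2) ≤ V (1, 1) + 1/(2*p) := by
      have h := hU rfl hp4 1 1 le_rfl
      rw [show (1:ℕ)+1 = 2 from rfl, Nat.cast_one] at h
      exact h
    have hinv : 2 * p * (1/(2*p)) = 1 := by
      field_simp
    have hx := mul_le_mul_of_nonneg_left hu2 (by linarith : (0:ℝ) ≤ 1 - 2 * p)
    rw [mul_add] at hx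
    linarith [hx, hm, hq, hinv, mul_nonneg (by linarith : (0:ℝ) ≤ 4 * p - 1) hm.le]

end RviAux
namespace RviAux

lemma good_all (N : ℕ) (p ps lam : ℝ)
    (hN : 2 ≤ N) (hp0 : 0 ≤ p) (hp1 : p ≤ 1 / 3)
    (hps0 : 0 < ps) (hps1 : ps ≤ 1) (hlam : 0 ≤ lam) :
    ∀ ν : ℕ, GoodV N p (Vit N p ps lam ν) := by
  intro ν
  induction ν with
  | zero => exact good_zero hp0 hp1
  | succ ν ih =>
    exact good_step N p ps lam hN hp0 hp1 hps0 hps1 hlam (Vit N p ps lam ν) ih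

end RviAux

/-- for every iteration `ν ≥ 0`, every `d ∈ {1,…,N-1}` and every `Δ ≥ 1`,
`V_ν(d,Δ) > V_ν(0,0)`: the reference state `(0,0)` has the strictly smallest
estimated value among all states with `d ≥ 1` and `Δ ≥ 1`. -/
theorem Vit_ref_state_strict_min
    (N : ℕ) (p ps lam : ℝ)
    (hN : 2 ≤ N) (hp0 : 0 ≤ p) (hp1 : p ≤ 1 / 3)
    (hps0 : 0 < ps) (hps1 : ps ≤ 1) (hlam : 0 ≤ lam)
    (ν d Δ : ℕ) (hd1 : 1 ≤ d) (hd : d ≤ N - 1) (hΔ : 1 ≤ Δ) :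
    Vit N p ps lam ν (0, 0) < Vit N p ps lam ν (d, Δ) := by
  obtain ⟨h00, hP, -, -, -, -⟩ :=
    RviAux.good_all N p ps lam hN hp0 hp1 hps0 hps1 hlam ν
  rw [h00]
  exact hP d Δ hd1 hd hΔ
end

section
/- For every iteration index ν ≥ 1 and every d ∈ {1,…,N−1}, the map Δ ↦ δV_ν(d,Δ) is strictly decreasing: δV_ν(d,Δ₁) < δV_ν(d,Δ₂) whenever Δ₁ > Δ₂ (the action-value difference between transmitting and idling strictly decreases as the age Δ grows). -/
lemma Vit_strictMono (N : ℕ) (p ps lam : ℝ)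
    (hp0 : 0 ≤ p) (hp1 : p ≤ 1 / 3) (hps1 : ps ≤ 1) (ν : ℕ) (d : ℕ) :
    StrictMono (fun Δ => Vit N p ps lam ν (d, Δ)) := by
  induction ν generalizing d with
  | zero =>
    intro a b hab
    simpa [Vit] using (by exact_mod_cast hab : (a : ℝ) < b)
  | succ ν ih =>
    intro a b hab
    have hS : ∀ e : ℕ, Ssum N p (Vit N p ps lam ν) e a ≤ Ssum N p (Vit N p ps lam ν) e b := by
      intro e
      apply Finset.sum_le_sum
      intro d' _
      apply mul_le_mul_of_nonneg_left _ (Pw_nonneg N p hp0 hp1 e d')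
      by_cases h0 : d' = 0
      · simp [h0]
      · simp only [h0, if_false]
        exact (ih d').monotone (by omega : a + d' ≤ b + d')
    have hab' : (a : ℝ) < b := by exact_mod_cast hab
    have h0 : Vact0 N p (Vit N p ps lam ν) d a < Vact0 N p (Vit N p ps lam ν) d b := by
      unfold Vact0; have := hS d; linarith
    have h1 : Vact1 N p ps lam (Vit N p ps lam ν) d a
        < Vact1 N p ps lam (Vit N p ps lam ν) d b := by
      unfold Vact1
      have := hS d
      have hmul : (1 - ps) * Ssum N p (Vit N p ps lam ν) d a
          ≤ (1 - ps) * Ssum N p (Vit N p ps lam ν) d b :=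
        mul_le_mul_of_nonneg_left this (by linarith)
      linarith
    show Vit N p ps lam (ν + 1) (d, a) < Vit N p ps lam (ν + 1) (d, b)
    simp only [Vit, Qit]
    exact sub_lt_sub_right (min_lt_min h0 h1) _

/-- for every iteration `ν ≥ 1` and every `d ∈ {1,…,N-1}`, the map
`Δ ↦ δV_ν(d,Δ)` is strictly decreasing: `δV_ν(d,Δ₁) < δV_ν(d,Δ₂)` whenever `Δ₁ > Δ₂`. -/
theorem dV_strictAnti_in_age
    (N : ℕ) (p ps lam : ℝ)
    (hN : 2 ≤ N) (hp0 : 0 ≤ p) (hp1 : p ≤ 1 / 3)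
    (hps0 : 0 < ps) (hps1 : ps ≤ 1) (hlam : 0 ≤ lam)
    (ν : ℕ) (hν : 1 ≤ ν) (d : ℕ) (hd1 : 1 ≤ d) (hd : d ≤ N - 1)
    (Δ₁ Δ₂ : ℕ) (hΔ : Δ₂ < Δ₁) :
    dV N p ps lam ν d Δ₁ < dV N p ps lam ν d Δ₂ := by
  have hd0 : d ≠ 0 := by omega
  have hSlt : Ssum N p (Vit N p ps lam (ν - 1)) d Δ₂
      < Ssum N p (Vit N p ps lam (ν - 1)) d Δ₁ := by
    apply Finset.sum_lt_sum
    · intro d' _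
      apply mul_le_mul_of_nonneg_left _ (Pw_nonneg N p hp0 hp1 d d')
      by_cases h0 : d' = 0
      · simp [h0]
      · simp only [h0, if_false]
        exact (Vit_strictMono N p ps lam hp0 hp1 hps1 (ν - 1) d').monotone
          (by omega : Δ₂ + d' ≤ Δ₁ + d')
    · refine ⟨d, Finset.mem_range.mpr (by omega), ?_⟩
      simp only [hd0, if_false]
      have hP : (0 : ℝ) < Pw N p d d := by
        have : Pw N p d d = 1 - 2 * p := by simp [Pw]
        rw [this]; linarith
      exact mul_lt_mul_of_pos_left
        (Vit_strictMono N p ps lam hp0 hp1 hps1 (ν - 1) d (by omega : Δ₂ + d < Δ₁ + d)) hP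
  have hmul : ps * Ssum N p (Vit N p ps lam (ν - 1)) d Δ₂
      < ps * Ssum N p (Vit N p ps lam (ν - 1)) d Δ₁ :=
    mul_lt_mul_of_pos_left hSlt hps0
  unfold dV Vact1 Vact0
  linarith
end

section
/- (Structural properties of the optimal policy.) For every iteration index ν ≥ 1, the active set {(d,Δ) : d ≥ 1 and δV_ν(d,Δ) ≤ 0} is of threshold type with thresholds non-increasing in d: there exists a non-increasing function n : {1,…,N−1} → ℕ ∪ {∞} such that for all d ∈ {1,…,N−1} and Δ ∈ ℕ one has δV_ν(d,Δ) ≤ 0 if and only if Δ ≥ n(d). Equivalently, if δV_ν(d,Δ) ≤ 0, d ≤ d′ ≤ N−1, and Δ′ ≥ Δ, then δV_ν(d′,Δ′) ≤ 0. -/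
namespace DVTaux

/-- evaluated function inside the sum -/
noncomputable def F (V : ℕ × ℕ → ℝ) (Δ k : ℕ) : ℝ := V (k, if k = 0 then 0 else Δ + k)

noncomputable def mf (ps c x : ℝ) : ℝ := min x (c + (1 - ps) * x)

lemma F_pos_arg (V : ℕ × ℕ → ℝ) (Δ k : ℕ) (hk : 1 ≤ k) : F V Δ k = V (k, Δ + k) := by
  have : k ≠ 0 := by omega
  simp [F, this]

lemma Pw_nonneg {N : ℕ} {p : ℝ} (hp0 : 0 ≤ p) (hp1 : p ≤ 1/3) (d d' : ℕ) :
    0 ≤ Pw N p d d' := by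
  unfold Pw; split_ifs <;> linarith

lemma Ssum_eqF (N : ℕ) (p : ℝ) (V : ℕ × ℕ → ℝ) (d Δ : ℕ) :
    Ssum N p V d Δ = ∑ d' ∈ Finset.range N, Pw N p d d' * F V Δ d' := rfl

lemma Ssum_row0 {N : ℕ} {p : ℝ} (hN : 2 ≤ N) (V : ℕ × ℕ → ℝ) (Δ : ℕ) :
    Ssum N p V 0 Δ = (1 - 2*p) * F V Δ 0 + 2*p * F V Δ 1 := by
  rw [Ssum_eqF]
  rw [← Finset.sum_subset (s₁ := ({0,1} : Finset ℕ))
      (by intro x hx; simp at hx ⊢; omega)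
      (by
        intro x hx hnx
        simp at hx hnx
        have hz : Pw N p 0 x = 0 := by
          unfold Pw
          split_ifs <;> first | rfl | (exfalso; omega)
        rw [hz, zero_mul])]
  rw [Finset.sum_pair (by omega : (0:ℕ) ≠ 1)]
  have h0 : Pw N p 0 0 = 1 - 2*p := by unfold Pw; simp
  have h1 : Pw N p 0 1 = 2*p := by
    unfold Pw; norm_num
  rw [h0, h1]

lemma Ssum_rowmid {N : ℕ} {p : ℝ} (V : ℕ × ℕ → ℝ) (Δ : ℕ) {d : ℕ}
    (hd1 : 1 ≤ d) (hd2 : d ≤ N - 2) :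
    Ssum N p V d Δ
      = p * F V Δ (d-1) + (1 - 2*p) * F V Δ d + p * F V Δ (d+1) := by
  rw [Ssum_eqF]
  rw [← Finset.sum_subset (s₁ := ({d-1, d, d+1} : Finset ℕ))
      (by intro x hx; simp at hx ⊢; omega)
      (by
        intro x hx hnx
        simp at hx hnx
        have hz : Pw N p d x = 0 := by
          unfold Pw
          split_ifs <;> first | rfl | (exfalso; omega)
        rw [hz, zero_mul])]
  rw [show ({d-1, d, d+1} : Finset ℕ) = insert (d-1) {d, d+1} from rfl]
  rw [Finset.sum_insert (by simp; omega), Finset.sum_pair (by omega : d ≠ d+1)]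
  have h0 : Pw N p d (d-1) = p := by
    unfold Pw
    split_ifs <;> first | rfl | (exfalso; omega)
  have h1 : Pw N p d d = 1 - 2*p := by unfold Pw; simp
  have h2 : Pw N p d (d+1) = p := by
    unfold Pw
    split_ifs <;> first | rfl | (exfalso; omega)
  rw [h0, h1, h2]; ring

lemma Ssum_rowtop {N : ℕ} {p : ℝ} (hN : 2 ≤ N) (V : ℕ × ℕ → ℝ) (Δ : ℕ) :
    Ssum N p V (N-1) Δ = 2*p * F V Δ (N-2) + (1 - 2*p) * F V Δ (N-1) := by
  rw [Ssum_eqF]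
  rw [← Finset.sum_subset (s₁ := ({N-2, N-1} : Finset ℕ))
      (by intro x hx; simp at hx ⊢; omega)
      (by
        intro x hx hnx
        simp at hx hnx
        have hz : Pw N p (N-1) x = 0 := by
          unfold Pw
          split_ifs <;> first | rfl | (exfalso; omega)
        rw [hz, zero_mul])]
  rw [Finset.sum_pair (by omega : N-2 ≠ N-1)]
  have h0 : Pw N p (N-1) (N-2) = 2*p := by
    unfold Pw
    split_ifs <;> first | rfl | (exfalso; omega)
  have h1 : Pw N p (N-1) (N-1) = 1 - 2*p := by unfold Pw; simp
  rw [h0, h1]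


section mono
variable {N : ℕ} {p ps lam : ℝ}

lemma mf_mono (hps1 : ps ≤ 1) {c x y : ℝ} (h : x ≤ y) : mf ps c x ≤ mf ps c y := by
  unfold mf
  exact min_le_min h (by nlinarith)

lemma mf_lip (hps0 : 0 ≤ ps) {c x y : ℝ} (h : x ≤ y) :
    mf ps c y ≤ mf ps c x + (y - x) := by
  unfold mf
  rw [← min_add_add_right]
  exact min_le_min (by linarith) (by nlinarith)

lemma Qit_eq (W : ℕ × ℕ → ℝ) (d Δ : ℕ) :
    Qit N p ps lam W d Δ
      = (Δ : ℝ) + mf ps (lam + ps * ((1 - 2*p) * W (0,0) + 2*p * W (1,1)))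
          (Ssum N p W d Δ) := by
  unfold Qit Vact0 Vact1 mf
  rw [← min_add_add_left]
  congr 1
  ring

lemma Vit_succ (ν d Δ : ℕ) :
    Vit N p ps lam (ν+1) (d, Δ)
      = Qit N p ps lam (Vit N p ps lam ν) d Δ
        - Qit N p ps lam (Vit N p ps lam ν) 0 0 := rfl

/-- Δ-monotonicity of Ssum. -/
lemma Ssum_mono_delta (hp0 : 0 ≤ p) (hp1 : p ≤ 1/3) (V : ℕ × ℕ → ℝ)
    (hB : ∀ d Δ Δ', Δ ≤ Δ' → V (d, Δ) ≤ V (d, Δ')) (d : ℕ) {Δ Δ' : ℕ} (h : Δ ≤ Δ') :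
    Ssum N p V d Δ ≤ Ssum N p V d Δ' := by
  rw [Ssum_eqF, Ssum_eqF]
  apply Finset.sum_le_sum
  intro i _
  apply mul_le_mul_of_nonneg_left _ (Pw_nonneg hp0 hp1 d i)
  unfold F
  split_ifs
  · exact le_refl _
  · exact hB i _ _ (by omega)

/-- monotonicity of k ↦ F V Δ k on {0,…,N-1}, from the invariants. -/
lemma F_mono (V : ℕ × ℕ → ℝ)
    (hA : V (0,0) = 0)
    (hC : ∀ d Δ, 1 ≤ d → d + 1 ≤ N - 1 → V (d, Δ + d) ≤ V (d+1, Δ + d + 1))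
    (hD : ∀ d Δ, 1 ≤ d → d ≤ N - 1 → 0 ≤ V (d, Δ + d))
    (Δ : ℕ) : ∀ j k, j ≤ k → k ≤ N - 1 → F V Δ j ≤ F V Δ k := by
  intro j k hjk hk
  rcases Nat.eq_zero_or_pos j with hj | hj
  · subst hj
    rcases Nat.eq_zero_or_pos k with hk0 | hk0
    · subst hk0; exact le_refl _
    · have h0 : F V Δ 0 = 0 := by
        show V (0, if (0:ℕ) = 0 then 0 else Δ + 0) = 0
        rw [if_pos rfl]; exact hA
      rw [h0, F_pos_arg _ _ _ hk0]
      exact hD k Δ hk0 hk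
  · induction k, hjk using Nat.le_induction with
    | base => exact le_refl _
    | succ k hk' ih =>
      have h1 : F V Δ k ≤ F V Δ (k+1) := by
        rw [F_pos_arg _ _ _ (by omega), F_pos_arg _ _ _ (by omega)]
        exact hC k Δ (by omega) hk
      exact (ih (by omega)).trans h1

lemma chain_ge (hN : 2 ≤ N) (V : ℕ × ℕ → ℝ)
    (hA : V (0,0) = 0)
    (hB : ∀ d Δ Δ', Δ ≤ Δ' → V (d, Δ) ≤ V (d, Δ'))
    (hC : ∀ d Δ, 1 ≤ d → d + 1 ≤ N - 1 → V (d, Δ + d) ≤ V (d+1, Δ + d + 1))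
    (hD : ∀ d Δ, 1 ≤ d → d ≤ N - 1 → 0 ≤ V (d, Δ + d))
    (A : ℕ) {k : ℕ} (hk1 : 1 ≤ k) (hk2 : k ≤ N - 1) :
    V (1,1) ≤ F V A k := by
  have h1 : V (1,1) ≤ V (1, A + 1) := hB 1 1 (A+1) (by omega)
  have h2 : F V A 1 = V (1, A + 1) := F_pos_arg _ _ _ (le_refl _)
  calc V (1,1) ≤ F V A 1 := by rw [h2]; exact h1
    _ ≤ F V A k := F_mono V hA hC hD A 1 k hk1 hk2

/-- d-monotonicity of Ssum: one step. -/
lemma Ssum_mono_step (hN : 2 ≤ N) (hp0 : 0 ≤ p) (hp1 : p ≤ 1/3) (V : ℕ × ℕ → ℝ) (Δ : ℕ)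
    (hf : ∀ j k, j ≤ k → k ≤ N - 1 → F V Δ j ≤ F V Δ k)
    {d : ℕ} (hd1 : 1 ≤ d) (hd2 : d + 1 ≤ N - 1) :
    Ssum N p V d Δ ≤ Ssum N p V (d+1) Δ := by
  by_cases hcase : d + 1 ≤ N - 2
  · rw [Ssum_rowmid V Δ hd1 (by omega), Ssum_rowmid V Δ (by omega) hcase]
    have e0 : d + 1 - 1 = d := by omega
    rw [e0]
    have f1 : F V Δ (d-1) ≤ F V Δ d := hf _ _ (by omega) (by omega)
    have f2 : F V Δ d ≤ F V Δ (d+1) := hf _ _ (by omega) (by omega)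
    have f3 : F V Δ (d+1) ≤ F V Δ (d+1+1) := hf _ _ (by omega) (by omega)
    have g1 := mul_le_mul_of_nonneg_left f1 hp0
    have g2 := mul_le_mul_of_nonneg_left f2 (by linarith : (0:ℝ) ≤ 1 - 2*p)
    have g3 := mul_le_mul_of_nonneg_left f3 hp0
    linarith
  · -- d + 1 = N - 1
    have hd3 : d + 1 = N - 1 := by omega
    rw [Ssum_rowmid V Δ hd1 (by omega), hd3, Ssum_rowtop hN V Δ]
    have e0 : N - 2 = d := by omega
    rw [e0]
    have f1 : F V Δ (d-1) ≤ F V Δ d := hf _ _ (by omega) (by omega)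
    have f2 : F V Δ d ≤ F V Δ (N-1) := hf _ _ (by omega) (by omega)
    have g1 := mul_le_mul_of_nonneg_left f1 hp0
    have g2 := mul_le_mul_of_nonneg_left f2 (by linarith : (0:ℝ) ≤ 1 - 3*p)
    linarith

lemma Ssum_mono_d (hN : 2 ≤ N) (hp0 : 0 ≤ p) (hp1 : p ≤ 1/3) (V : ℕ × ℕ → ℝ) (Δ : ℕ)
    (hf : ∀ j k, j ≤ k → k ≤ N - 1 → F V Δ j ≤ F V Δ k)
    {d d' : ℕ} (hd1 : 1 ≤ d) (hdd : d ≤ d') (hd2 : d' ≤ N - 1) :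
    Ssum N p V d Δ ≤ Ssum N p V d' Δ := by
  induction d', hdd using Nat.le_induction with
  | base => exact le_refl _
  | succ k hk ih =>
    exact (ih (by omega)).trans (Ssum_mono_step hN hp0 hp1 V Δ hf (by omega) hd2)

end mono

/-- The key invariants of the relative value iteration, by induction on ν. -/
lemma invariants {N : ℕ} {p ps lam : ℝ}
    (hN : 2 ≤ N) (hp0 : 0 ≤ p) (hp1 : p ≤ 1/3)
    (hps0 : 0 < ps) (hps1 : ps ≤ 1) (hlam : 0 ≤ lam) (ν : ℕ) :
    Vit N p ps lam ν (0,0) = 0 ∧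
    (∀ d Δ Δ', Δ ≤ Δ' → Vit N p ps lam ν (d,Δ) ≤ Vit N p ps lam ν (d,Δ')) ∧
    (∀ d Δ, 1 ≤ d → d + 1 ≤ N - 1 →
      Vit N p ps lam ν (d, Δ + d) ≤ Vit N p ps lam ν (d+1, Δ + d + 1)) ∧
    (∀ d Δ, 1 ≤ d → d ≤ N - 1 → 0 ≤ Vit N p ps lam ν (d, Δ + d)) ∧
    (N = 2 → ∀ Δ : ℕ, 1 ≤ Δ →
      4*p^2 * Vit N p ps lam ν (1, Δ) ≤ 2*p*(Δ:ℝ) + (1 - 2*p)) := by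
  induction ν with
  | zero =>
    refine ⟨by simp [Vit], ?_, ?_, ?_, ?_⟩
    · intro d Δ Δ' h
      show ((Δ:ℕ):ℝ) ≤ ((Δ':ℕ):ℝ)
      exact_mod_cast h
    · intro d Δ _ _
      show ((Δ + d : ℕ):ℝ) ≤ ((Δ + d + 1 : ℕ):ℝ)
      exact_mod_cast Nat.le_succ _
    · intro d Δ _ _
      show (0:ℝ) ≤ ((Δ + d : ℕ):ℝ)
      positivity
    · intro _ Δ hΔ
      show 4*p^2 * ((Δ:ℕ):ℝ) ≤ 2*p*(Δ:ℝ) + (1 - 2*p)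
      have h1 : (1:ℝ) ≤ (Δ:ℝ) := by exact_mod_cast hΔ
      nlinarith [mul_nonneg (mul_nonneg hp0 (by linarith : (0:ℝ) ≤ 1 - 2*p))
        (by linarith : (0:ℝ) ≤ (Δ:ℝ))]
  | succ ν IH =>
    obtain ⟨hA, hB, hC, hD, hE⟩ := IH
    set W := Vit N p ps lam ν with hW
    set c : ℝ := lam + ps * ((1 - 2*p) * W (0,0) + 2*p * W (1,1)) with hc
    have hV : ∀ d Δ, Vit N p ps lam (ν+1) (d, Δ)
        = (Δ:ℝ) + mf ps c (Ssum N p W d Δ) - mf ps c (Ssum N p W 0 0) := by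
      intro d Δ
      rw [Vit_succ, Qit_eq, Qit_eq]
      push_cast
      ring
    -- basic quantities
    have hW11 : 0 ≤ W (1,1) := by
      have := hD 1 0 (le_refl _) (by omega)
      simpa using this
    have hS00 : Ssum N p W 0 0 = 2*p * W (1,1) := by
      rw [Ssum_row0 hN W 0]
      have e0 : F W 0 0 = W (0,0) := rfl
      have e1 : F W 0 1 = W (1,1) := by rw [F_pos_arg _ _ _ (le_refl _)]
      rw [e0, e1, hA]; ring
    have hFmono : ∀ Δ, ∀ j k, j ≤ k → k ≤ N - 1 → F W Δ j ≤ F W Δ k :=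
      fun Δ => F_mono W hA hC hD Δ
    have hchain : ∀ (A : ℕ) {k : ℕ}, 1 ≤ k → k ≤ N - 1 → W (1,1) ≤ F W A k :=
      fun A {k} hk1 hk2 => chain_ge hN W hA hB hC hD A hk1 hk2
    -- positivity at the new step: Ssum ≥ Ssum 0 0 holds except in the N = 2 corner
    constructor
    · -- (A)
      rw [hV 0 0]; ring
    constructor
    · -- (B)
      intro d Δ Δ' h
      rw [hV d Δ, hV d Δ']
      have h1 : Ssum N p W d Δ ≤ Ssum N p W d Δ' :=
        Ssum_mono_delta hp0 hp1 W (fun a b b' hb => hB a b b' hb) d h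
      have h2 := mf_mono (c := c) hps1 h1
      have h3 : ((Δ:ℕ):ℝ) ≤ ((Δ':ℕ):ℝ) := by exact_mod_cast h
      linarith
    constructor
    · -- (C)
      intro d Δ hd1 hd2
      rw [hV d (Δ + d), hV (d+1) (Δ + d + 1)]
      have h1 : Ssum N p W d (Δ + d) ≤ Ssum N p W d (Δ + d + 1) :=
        Ssum_mono_delta hp0 hp1 W (fun a b b' hb => hB a b b' hb) d (by omega)
      have h2 : Ssum N p W d (Δ + d + 1) ≤ Ssum N p W (d+1) (Δ + d + 1) :=
        Ssum_mono_step hN hp0 hp1 W (Δ + d + 1) (hFmono _) hd1 hd2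
      have h3 := mf_mono (c := c) hps1 (h1.trans h2)
      have h4 : ((Δ + d:ℕ):ℝ) ≤ ((Δ + d + 1:ℕ):ℝ) := by
        push_cast; linarith
      linarith
    constructor
    · -- (D)
      intro d Δ hd1 hd2
      rw [hV d (Δ + d)]
      have hcast : (0:ℝ) ≤ ((Δ + d:ℕ):ℝ) := by positivity
      by_cases hN2 : N = 2
      · -- boundary case N = 2, d = 1
        subst hN2
        have hd : d = 1 := by omega
        subst hd
        have hrow : Ssum 2 p W 1 (Δ + 1) = (1 - 2*p) * W (1, Δ + 1 + 1) := by
          have := Ssum_rowtop (N := 2) (p := p) (by norm_num) W (Δ + 1)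
          norm_num at this
          rw [this]
          have e0 : F W (Δ+1) 0 = W (0,0) := rfl
          have e1 : F W (Δ+1) 1 = W (1, Δ + 1 + 1) := by
            rw [F_pos_arg _ _ _ (le_refl _)]
          rw [e0, e1, hA]; ring
        rw [hrow, hS00]
        by_cases hle : 2*p * W (1,1) ≤ (1 - 2*p) * W (1, Δ + 1 + 1)
        · have := mf_mono (c := c) hps1 hle
          linarith
        · push_neg at hle
          have hlip := mf_lip (c := c) hps0.le hle.le
          -- mf (2p W11) ≤ mf ((1-2p) W(1,Δ+2)) + (2p W11 - (1-2p) W(1,Δ+2))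
          have hWA : W (1,1) ≤ W (1, Δ + 1 + 1) := hB 1 1 (Δ+1+1) (by omega)
          have hE1 : 4*p^2 * W (1,1) ≤ 2*p*(1:ℝ) + (1 - 2*p) := by
            have := hE rfl 1 (le_refl _)
            simpa using this
          have hkey : 2*p * W (1,1) - (1 - 2*p) * W (1, Δ + 1 + 1) ≤ 1 := by
            nlinarith [mul_le_mul_of_nonneg_left hWA (by linarith : (0:ℝ) ≤ 1 - 2*p),
              mul_nonneg (sq_nonneg (2*p - 1)) hW11]
          have h1 : ((Δ + 1:ℕ):ℝ) = (Δ:ℝ) + 1 := by push_cast; ring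
          linarith
      · -- N ≥ 3 : here Ssum d (Δ+d) ≥ Ssum 0 0 outright
        have hN3 : 3 ≤ N := by omega
        have hmain : Ssum N p W 0 0 ≤ Ssum N p W d (Δ + d) := by
          by_cases hdtop : d ≤ N - 2
          · rw [Ssum_rowmid W (Δ + d) hd1 hdtop, hS00]
            have h2 : W (1,1) ≤ F W (Δ + d) d := hchain _ hd1 (by omega)
            have h3 : W (1,1) ≤ F W (Δ + d) (d+1) := hchain _ (by omega) (by omega)
            have h4 : 0 ≤ F W (Δ + d) (d-1) := by
              rcases Nat.eq_zero_or_pos (d-1) with h | h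
              · rw [h]
                show (0:ℝ) ≤ W (0, if (0:ℕ) = 0 then 0 else (Δ+d) + 0)
                rw [if_pos rfl, hA]
              · exact hW11.trans (hchain _ h (by omega))
            have g1 := mul_le_mul_of_nonneg_left h2 (by linarith : (0:ℝ) ≤ 1 - 2*p)
            have g2 := mul_le_mul_of_nonneg_left h3 hp0
            have g3 := mul_nonneg hp0 h4
            nlinarith
          · have hd : d = N - 1 := by omega
            subst hd
            rw [Ssum_rowtop hN W (Δ + (N-1)), hS00]
            have h2 : W (1,1) ≤ F W (Δ + (N-1)) (N-2) := hchain _ (by omega) (by omega)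
            have h3 : W (1,1) ≤ F W (Δ + (N-1)) (N-1) := hchain _ (by omega) (by omega)
            have g1 := mul_le_mul_of_nonneg_left h2 (by linarith : (0:ℝ) ≤ 2*p)
            have g2 := mul_le_mul_of_nonneg_left h3 (by linarith : (0:ℝ) ≤ 1 - 2*p)
            nlinarith
        have := mf_mono (c := c) hps1 hmain
        linarith
    · -- (E)
      intro hN2 Δ hΔ
      subst hN2
      rw [hV 1 Δ]
      have hrow : Ssum 2 p W 1 Δ = (1 - 2*p) * W (1, Δ + 1) := by
        have := Ssum_rowtop (N := 2) (p := p) (by norm_num) W Δ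
        norm_num at this
        rw [this]
        have e0 : F W Δ 0 = W (0,0) := rfl
        have e1 : F W Δ 1 = W (1, Δ + 1) := by rw [F_pos_arg _ _ _ (le_refl _)]
        rw [e0, e1, hA]; ring
      have hWA0 : 0 ≤ W (1, Δ + 1) := by
        have := hD 1 Δ (le_refl _) (by omega)
        simpa using this
      have hub : mf ps c (Ssum 2 p W 1 Δ) - mf ps c (Ssum 2 p W 0 0)
          ≤ (1 - 2*p) * W (1, Δ + 1) := by
        rw [hrow, hS00]
        by_cases hle : (1 - 2*p) * W (1, Δ + 1) ≤ 2*p * W (1,1)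
        · have := mf_mono (c := c) hps1 hle
          nlinarith
        · push_neg at hle
          have hlip := mf_lip (c := c) hps0.le hle.le
          nlinarith [mul_nonneg (mul_nonneg (by norm_num : (0:ℝ) ≤ 2) hp0) hW11]
      have hE1 : 4*p^2 * W (1, Δ + 1) ≤ 2*p*((Δ:ℝ)+1) + (1 - 2*p) := by
        have := hE rfl (Δ+1) (by omega)
        push_cast at this
        linarith
      have hfin : Vit 2 p ps lam (ν+1) (1, Δ) ≤ (Δ:ℝ) + (1 - 2*p) * W (1, Δ + 1) := by
        rw [hV 1 Δ]
        linarith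
      nlinarith [mul_le_mul_of_nonneg_left hfin (by positivity : (0:ℝ) ≤ 4*p^2),
        mul_le_mul_of_nonneg_left hE1 (by linarith : (0:ℝ) ≤ 1 - 2*p)]


lemma dV_eq {N : ℕ} {p ps lam : ℝ} (ν d Δ : ℕ) :
    dV N p ps lam ν d Δ
      = lam + ps * ((1 - 2*p) * Vit N p ps lam (ν-1) (0,0)
          + 2*p * Vit N p ps lam (ν-1) (1,1))
        - ps * Ssum N p (Vit N p ps lam (ν-1)) d Δ := by
  unfold dV Vact1 Vact0
  ring

end DVTaux

/-- structural properties of the optimal policy: for every iteration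
`ν ≥ 1`, the active set `{(d,Δ) : d ≥ 1, δV_ν(d,Δ) ≤ 0}` is of threshold type with
thresholds non-increasing in `d`: there is `n : ℕ → ℕ∞`, non-increasing on
`{1,…,N-1}`, with `δV_ν(d,Δ) ≤ 0 ↔ Δ ≥ n(d)` for all `d ∈ {1,…,N-1}`, `Δ ∈ ℕ`.
Equivalently, if `δV_ν(d,Δ) ≤ 0`, `d ≤ d' ≤ N-1` and `Δ' ≥ Δ`, then `δV_ν(d',Δ') ≤ 0`. -/
theorem dV_threshold_structure
    (N : ℕ) (p ps lam : ℝ)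
    (hN : 2 ≤ N) (hp0 : 0 ≤ p) (hp1 : p ≤ 1 / 3)
    (hps0 : 0 < ps) (hps1 : ps ≤ 1) (hlam : 0 ≤ lam)
    (ν : ℕ) (hν : 1 ≤ ν) :
    (∃ n : ℕ → ℕ∞,
      (∀ d d' : ℕ, 1 ≤ d → d ≤ d' → d' ≤ N - 1 → n d' ≤ n d) ∧
      (∀ d : ℕ, 1 ≤ d → d ≤ N - 1 → ∀ Δ : ℕ,
        dV N p ps lam ν d Δ ≤ 0 ↔ n d ≤ (Δ : ℕ∞))) ∧
    (∀ d d' Δ Δ' : ℕ, 1 ≤ d → d ≤ d' → d' ≤ N - 1 → Δ ≤ Δ' →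
      dV N p ps lam ν d Δ ≤ 0 → dV N p ps lam ν d' Δ' ≤ 0) := by
  classical
  obtain ⟨hA, hB, hC, hD, -⟩ :=
    DVTaux.invariants (N := N) (p := p) (ps := ps) (lam := lam)
      hN hp0 (by linarith) hps0 hps1 hlam (ν - 1)
  set W := Vit N p ps lam (ν - 1) with hW
  -- the key monotone-transfer property
  have key : ∀ d d' Δ Δ' : ℕ, 1 ≤ d → d ≤ d' → d' ≤ N - 1 → Δ ≤ Δ' →
      dV N p ps lam ν d Δ ≤ 0 → dV N p ps lam ν d' Δ' ≤ 0 := by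
    intro d d' Δ Δ' hd1 hdd hd2 hΔΔ h
    rw [DVTaux.dV_eq] at h ⊢
    have h1 : Ssum N p W d Δ ≤ Ssum N p W d Δ' :=
      DVTaux.Ssum_mono_delta hp0 (by linarith) W (fun a b b' hb => hB a b b' hb) d hΔΔ
    have h2 : Ssum N p W d Δ' ≤ Ssum N p W d' Δ' :=
      DVTaux.Ssum_mono_d hN hp0 (by linarith) W Δ'
        (DVTaux.F_mono W hA hC hD Δ') hd1 hdd hd2
    have h3 := mul_le_mul_of_nonneg_left (h1.trans h2) hps0.le
    rw [← hW] at h ⊢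
    linarith
  refine ⟨⟨fun d => ⨅ (Δ : ℕ) (_ : dV N p ps lam ν d Δ ≤ 0), (Δ : ℕ∞), ?_, ?_⟩, key⟩
  · intro d d' hd1 hdd hd2
    refine le_iInf₂ fun Δ hΔ => ?_
    exact iInf₂_le Δ (key d d' Δ Δ hd1 hdd hd2 (le_refl _) hΔ)
  · intro d hd1 hd2 Δ
    constructor
    · intro h
      exact iInf₂_le Δ h
    · intro h
      by_contra hc
      have h1 : ∀ Δ₀ : ℕ, dV N p ps lam ν d Δ₀ ≤ 0 → Δ + 1 ≤ Δ₀ := by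
        intro Δ₀ h₀
        by_contra hc2
        push_neg at hc2
        exact hc (key d d Δ₀ Δ hd1 (le_refl _) hd2 (by omega) h₀)
      have h2 : ((Δ:ℕ):ℕ∞) + 1 ≤ ⨅ (Δ₀ : ℕ) (_ : dV N p ps lam ν d Δ₀ ≤ 0), (Δ₀ : ℕ∞) := by
        refine le_iInf₂ fun Δ₀ h₀ => ?_
        have := h1 Δ₀ h₀
        exact_mod_cast (by exact_mod_cast Nat.cast_le.mpr this : ((Δ+1:ℕ):ℕ∞) ≤ (Δ₀:ℕ∞))
      have h3 := h2.trans h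
      have h4 : ((Δ+1:ℕ):ℕ∞) ≤ ((Δ:ℕ):ℕ∞) := by
        push_cast
        exact h3
      rw [Nat.cast_le] at h4
      omega
end

section
/- (Reachable states satisfy the age lower bound.) Every state (d,Δ) reachable from (0,0) by finitely many steps of the one-step successor relation → satisfies: if d = 0 then Δ = 0, and if d ≥ 1 then Δ ≥ d(d+1)/2. -/
/-- One-step successor relation on states `(d,Δ)` (with `d ∈ {0,…,N-1}`, `Δ ∈ ℕ`):
`(d,Δ) → (d',Δ')` iff either `(d',Δ') ∈ {(0,0),(1,1)}` (a successful transmission),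
or `d' ∈ {0,…,N-1}` with `|d' - d| ≤ 1` and `Δ' = 0` when `d' = 0`,
`Δ' = Δ + d'` when `d' ≥ 1` (source evolution without a new received update). -/
def Step (N : ℕ) (x y : ℕ × ℕ) : Prop :=
  y = (0, 0) ∨ y = (1, 1) ∨
    (y.1 ≤ N - 1 ∧ (y.1 ≤ x.1 + 1 ∧ x.1 ≤ y.1 + 1) ∧
      y.2 = if y.1 = 0 then 0 else x.2 + y.1)

lemma inv_aux (N : ℕ) (p : ℕ × ℕ)
    (h : Relation.ReflTransGen (Step N) (0, 0) p) :
    (p.1 = 0 → p.2 = 0) ∧ (1 ≤ p.1 → p.1 * (p.1 + 1) / 2 ≤ p.2) := by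
  induction h with
  | refl => simp
  | tail _ hstep ih =>
    rename_i b c _
    rcases hstep with h | h | ⟨_, ⟨hle, _⟩, heq⟩
    · subst h; simp
    · subst h; simp
    · obtain ⟨ih0, ih1⟩ := ih
      constructor
      · intro hc0
        rw [heq, if_pos hc0]
      · intro hc1
        have hce : c.2 = b.2 + c.1 := by rw [heq, if_neg (by omega)]
        obtain ⟨m, hm⟩ : ∃ m, c.1 = m + 1 := ⟨c.1 - 1, by omega⟩
        have hev := Nat.even_mul_succ_self m
        obtain ⟨k, hk⟩ := hev
        have h2 : c.1 * (c.1 + 1) / 2 = m * (m + 1) / 2 + (m + 1) := by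
          rw [hm]
          have h3 : (m + 1) * (m + 1 + 1) = m * (m + 1) + 2 * (m + 1) := by ring
          omega
        rcases Nat.eq_zero_or_pos b.1 with hb | hb
        · have hb2 : b.2 = 0 := ih0 hb
          have : c.1 ≤ 1 := by omega
          have : m = 0 := by omega
          simp [this] at h2
          omega
        · have h1 := ih1 hb
          have : m * (m + 1) / 2 ≤ b.1 * (b.1 + 1) / 2 := by
            apply Nat.div_le_div_right
            apply Nat.mul_le_mul <;> omega
          omega

/-- reachable states satisfy the age lower bound: every state `(d,Δ)`
reachable from `(0,0)` by finitely many steps of `→` satisfies: if `d = 0` then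
`Δ = 0`, and if `d ≥ 1` then `Δ ≥ d(d+1)/2`. -/
theorem reachable_age_lower_bound
    (N : ℕ) (hN : 2 ≤ N) (d Δ : ℕ)
    (hreach : Relation.ReflTransGen (Step N) (0, 0) (d, Δ)) :
    (d = 0 → Δ = 0) ∧ (1 ≤ d → d * (d + 1) / 2 ≤ Δ) := by
  exact inv_aux N (d, Δ) hreach
end

section
/- (Transmission attempts help reach the synchronized state.) Assume N ≥ 3 and 0 ≤ p ≤ 1/3. Then for every state (d,Δ), the one-step probability of moving to state (0,0) under action a = 1 is at least that under action a = 0: K_1((d,Δ),(0,0)) ≥ K_0((d,Δ),(0,0)). -/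
/-- One-step transition kernel under action `a = 0` (idle):
`K₀((d,Δ),(d',Δ'(d'))) = P_{d,d'}` where `Δ'(d') = 0` if `d' = 0` and
`Δ'(d') = Δ + d'` otherwise. -/
noncomputable def K0 (N : ℕ) (p : ℝ) (x y : ℕ × ℕ) : ℝ :=
  if y.2 = (if y.1 = 0 then 0 else x.2 + y.1) then Pw N p x.1 y.1 else 0

/-- One-step transition kernel under action `a = 1` (transmit):
`K₁((d,Δ),·) = p_s(1-2p)·δ_{(0,0)} + 2 p_s p·δ_{(1,1)} + p_f·K₀((d,Δ),·)`,
with `p_f = 1 - p_s`. -/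
noncomputable def K1 (N : ℕ) (p ps : ℝ) (x y : ℕ × ℕ) : ℝ :=
  ps * (1 - 2 * p) * (if y = (0, 0) then 1 else 0)
    + 2 * ps * p * (if y = (1, 1) then 1 else 0)
    + (1 - ps) * K0 N p x y

/-- transmission attempts help reach the synchronized state:
assume `N ≥ 3` and `0 ≤ p ≤ 1/3`; then for every state `(d,Δ)`, the one-step
probability of moving to `(0,0)` under action `a = 1` is at least that under
action `a = 0`: `K₁((d,Δ),(0,0)) ≥ K₀((d,Δ),(0,0))`. -/
theorem transmit_helps_reach_sync
    (N : ℕ) (p ps : ℝ)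
    (hN : 3 ≤ N) (hp0 : 0 ≤ p) (hp1 : p ≤ 1 / 3)
    (hps0 : 0 < ps) (hps1 : ps ≤ 1)
    (d Δ : ℕ) (hd : d ≤ N - 1) :
    K0 N p (d, Δ) (0, 0) ≤ K1 N p ps (d, Δ) (0, 0) := by
  have hkey : K0 N p (d, Δ) (0, 0) ≤ 1 - 2 * p := by
    simp only [K0, Pw]
    split_ifs <;> first | linarith | (exfalso; omega)
  simp only [K1, if_pos rfl, if_neg (show ((0:ℕ),(0:ℕ)) ≠ (1,1) by simp), if_true, mul_one, mul_zero, add_zero]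
  nlinarith [mul_nonneg hps0.le (sub_nonneg.2 hkey)]
end

section
/- (Expected transmission rate: the finite balance system.) Assume N ≥ 3. Let n = (n_1,…,n_{N−1}) be a threshold policy with τ = max_d n_d ≥ 2, write l_d = d(d+1)/2, and let π be a stationary distribution of the chain induced by n; set Π_d = Σ_{Δ ≥ τ} π_d(Δ). Then the expected transmission rate R̄ = Σ_{d=1}^{N−1} Σ_{Δ ≥ n_d} π_d(Δ) equals Σ_{d=1}^{N−1} (Σ_{Δ=n_d}^{τ−1} π_d(Δ) + Π_d), and the following finite system of equations holds: (i) for each 1 ≤ d ≤ N−1, π_d(Δ) = 0 for all Δ with 0 ≤ Δ < l_d; (ii) for each 1 ≤ d ≤ N−1 and each Δ with max{2, l_d} ≤ Δ ≤ τ−1, π_d(Δ) = Σ_{d′=1}^{N−1} P_{d′,d}·(1 − p_s·a(d′,Δ−d))·π_{d′}(Δ−d); (iii) for each 1 ≤ d ≤ N−1, Π_d = Σ_{d′=1}^{N−1} P_{d′,d}·(Σ_{Δ=τ−d}^{τ−1}(1 − p_s·a(d′,Δ))·π_{d′}(Δ) + p_f·Π_{d′}); (iv) π_0(0) = (1−2p)·π_0(0)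 + p·Σ_{Δ=1}^{τ−1}(1 − p_s·a(1,Δ))·π_1(Δ) + p_f·p·Π_1 + p_s(1−2p)·Σ_{d=1}^{N−1}(Σ_{Δ=n_d}^{τ−1} π_d(Δ) + Π_d); (v) π_1(1) = 2p·π_0(0) + 2p_s·p·Σ_{d=1}^{N−1}(Σ_{Δ=n_d}^{τ−1} π_d(Δ) + Π_d); (vi) Σ_{d=1}^{N−1}(Σ_{Δ=l_d}^{τ−1} π_d(Δ) + Π_d) + π_0(0) = 1. -/
/-- Kernel induced by a threshold policy `n = (n_1,…,n_{N-1})`: the policy takes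
action `a(d,Δ) = 1` if `d ≥ 1` and `Δ ≥ n_d`, and `a(d,Δ) = 0` otherwise. -/
noncomputable def Kpol (N : ℕ) (p ps : ℝ) (n : ℕ → ℕ) (x y : ℕ × ℕ) : ℝ :=
  if 1 ≤ x.1 ∧ n x.1 ≤ x.2 then K1 N p ps x y else K0 N p x y

/-- `IsStationary N p ps n π`: `π` is a stationary distribution of the chain induced
by the threshold policy `n`: `π` takes values in `[0,1]`, is supported on states with
`d ≤ N-1`, sums to `1`, and satisfies `π(x) = Σ_{x'} K(x',x)·π(x')` for every `x`. -/
def IsStationaryPol (N : ℕ) (p ps : ℝ) (n : ℕ → ℕ) (π : ℕ × ℕ → ℝ) : Prop :=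
  (∀ x, 0 ≤ π x ∧ π x ≤ 1) ∧
  (∀ x : ℕ × ℕ, N ≤ x.1 → π x = 0) ∧
  HasSum π 1 ∧
  (∀ x : ℕ × ℕ, HasSum (fun x' => Kpol N p ps n x' x * π x') (π x))

/-- Real-valued action indicator of the threshold policy `n`:
`a(d,Δ) = 1` if `d ≥ 1` and `Δ ≥ n_d`, else `0`. -/
noncomputable def Aact (n : ℕ → ℕ) (d Δ : ℕ) : ℝ :=
  if 1 ≤ d ∧ n d ≤ Δ then 1 else 0

/-- Tail mass `Π_d = Σ_{Δ ≥ τ} π_d(Δ)`. -/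
noncomputable def Pid (π : ℕ × ℕ → ℝ) (τ d : ℕ) : ℝ := ∑' Δ : ℕ, π (d, Δ + τ)

/-- The age lower bound `l_d = d(d+1)/2`. -/
def lB (d : ℕ) : ℕ := d * (d + 1) / 2

/-
A state `(d, Δ)` with `d ≥ 1`, other than `(1, 1)`, can only be entered from the states
`(d', Δ - d)` through the idle part `(1 - p_s a) K₀` of the kernel; this gives the interior
balance equations (ii) and, by strong induction on `Δ`, the vanishing (i) of `π_d` below
`l_d = l_{d-1} + d`. From age `τ` on every state transmits, so `a = 1` there and summing the
balance equations over `Δ ≥ τ` gives (iii). The states `(0, 0)` and `(1, 1)` receive in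
addition the successful transmissions `p_s (1 - 2p) R̄` and `2 p_s p R̄`, where `R̄ = Σ a π`,
which gives (iv) and (v); (vi) is `Σ π = 1`. Since `π` vanishes on the rows `d ≥ N`, all sums
over the state space reduce to finitely many row sums over `Δ`.
-/

open Finset

theorem hasSum_prod_of_rows {α β γ : Type*} [AddCommMonoid α] [TopologicalSpace α]
    [ContinuousAdd α] [DecidableEq β] {f : β × γ → α} {s : Finset β} {r : β → α}
    (hf : ∀ x, x.1 ∉ s → f x = 0) (hr : ∀ b ∈ s, HasSum (fun c => f (b, c)) (r b)) :
    HasSum f (∑ b ∈ s, r b) := by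
  have hsplit : f = fun x => ∑ b ∈ s, if x.1 = b then f x else 0 := by
    funext x
    rw [sum_ite_eq]
    split_ifs with hx
    · rfl
    · exact hf x hx
  rw [hsplit]
  refine hasSum_sum fun b hb => ?_
  have hinj : Function.Injective (fun c : γ => (b, c)) := fun _ _ h => (Prod.mk.inj h).2
  refine (hinj.hasSum_iff fun x hx => ?_).mp ?_
  · rw [if_neg]
    rintro rfl
    exact hx ⟨x.2, rfl⟩
  · simpa only [Function.comp_def, if_true] using hr b hb

theorem HasSum.nat_add_Ico {G : Type*} [AddCommGroup G] [TopologicalSpace G]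
    [IsTopologicalAddGroup G] {f : ℕ → G} {a b : ℕ} {T : G} (hab : a ≤ b)
    (h : HasSum (fun j => f (j + b)) T) :
    HasSum (fun j => f (j + a)) (∑ i ∈ Ico a b, f i + T) := by
  refine (hasSum_nat_add_iff' (b - a)).mp ?_
  rw [sum_Ico_eq_sum_range]
  simpa only [add_assoc, Nat.sub_add_cancel hab, add_comm a, add_sub_cancel_left] using h

theorem lB_succ (k : ℕ) : lB (k + 1) = lB k + (k + 1) := by
  unfold lB
  rw [show (k + 1) * (k + 1 + 1) = k * (k + 1) + 2 * (k + 1) by ring,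
    Nat.add_mul_div_left _ _ two_pos]

theorem lB_mono {a b : ℕ} (h : a ≤ b) : lB a ≤ lB b :=
  Nat.div_le_div_right (Nat.mul_le_mul h (by omega))

theorem self_le_lB (d : ℕ) : d ≤ lB d := by
  induction d with
  | zero => exact le_rfl
  | succ k _ => rw [lB_succ]; omega

section Weights

variable {N : ℕ} {p : ℝ}

theorem Pw_zero_left (hN : 3 ≤ N) {d : ℕ} (hd : 2 ≤ d) : Pw N p 0 d = 0 := by
  rw [Pw, if_neg (by omega), if_neg (by omega), if_neg (by omega), if_neg (by omega)]

theorem Pw_zero_right (hN : 3 ≤ N) {d : ℕ} (hd : 2 ≤ d) : Pw N p d 0 = 0 := by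
  rw [Pw, if_neg (by omega), if_neg (by omega), if_neg (by omega), if_neg (by omega)]

theorem Pw_eq_zero_of_add_one_lt {d d' : ℕ} (h : d' + 1 < d) : Pw N p d' d = 0 := by
  rw [Pw, if_neg (by omega), if_neg (by omega), if_neg (by omega), if_neg (by omega)]

theorem Pw_one_zero (hN : 3 ≤ N) : Pw N p 1 0 = p := by
  rw [Pw, if_neg (by omega), if_neg (by omega), if_neg (by omega), if_pos (by omega)]

end Weights

theorem Aact_zero_left (n : ℕ → ℕ) (Δ : ℕ) : Aact n 0 Δ = 0 := by simp [Aact]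

theorem Aact_of_le {n : ℕ → ℕ} {d Δ : ℕ} (hd : 1 ≤ d) (h : n d ≤ Δ) : Aact n d Δ = 1 :=
  if_pos ⟨hd, h⟩

theorem Aact_of_lt {n : ℕ → ℕ} {d Δ : ℕ} (h : Δ < n d) : Aact n d Δ = 0 :=
  if_neg fun h' => by omega

theorem K0_apply_of_ne_zero {N : ℕ} {p : ℝ} (x : ℕ × ℕ) {d : ℕ} (hd : d ≠ 0) (Δ : ℕ) :
    K0 N p x (d, Δ) = if Δ = x.2 + d then Pw N p x.1 d else 0 := by
  simp [K0, hd]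

theorem Kpol_eq (N : ℕ) (p ps : ℝ) (n : ℕ → ℕ) (x y : ℕ × ℕ) :
    Kpol N p ps n x y = Aact n x.1 x.2 * (ps * (1 - 2 * p) * (if y = (0, 0) then 1 else 0)
        + 2 * ps * p * (if y = (1, 1) then 1 else 0))
      + (1 - ps * Aact n x.1 x.2) * K0 N p x y := by
  unfold Kpol K1 Aact
  split_ifs <;> ring

namespace IsStationaryPol

variable {N : ℕ} {p ps : ℝ} {n : ℕ → ℕ} {π : ℕ × ℕ → ℝ} (hπ : IsStationaryPol N p ps n π)
include hπ

theorem hasSum_inflow_of_pos {d Δ : ℕ} (hd : 1 ≤ d) (hne : (d, Δ) ≠ (1, 1)) :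
    HasSum (fun x => (1 - ps * Aact n x.1 x.2) * K0 N p x (d, Δ) * π x) (π (d, Δ)) := by
  convert hπ.2.2.2 (d, Δ) using 2 with x
  rw [Kpol_eq, if_neg (by simp; omega), if_neg hne]
  ring

theorem apply_zero_of_ne_zero {Δ : ℕ} (hΔ : Δ ≠ 0) : π (0, Δ) = 0 := by
  have hK : ∀ x, Kpol N p ps n x (0, Δ) * π x = 0 := fun x => by
    simp [Kpol_eq, K0, hΔ]
  have h := hπ.2.2.2 (0, Δ)
  simp only [hK] at h
  exact h.unique hasSum_zero

theorem apply_of_lt {d Δ : ℕ} (hd : 1 ≤ d) (h : Δ < d) : π (d, Δ) = 0 := by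
  have hK : ∀ x : ℕ × ℕ, (1 - ps * Aact n x.1 x.2) * K0 N p x (d, Δ) * π x = 0 := fun x => by
    rw [K0_apply_of_ne_zero x (by omega), if_neg (by omega), mul_zero, zero_mul]
  have h := hπ.hasSum_inflow_of_pos hd (Δ := Δ) (by simp; omega)
  simp only [hK] at h
  exact h.unique hasSum_zero

theorem apply_eq_sum (hN : 3 ≤ N) {d Δ : ℕ} (hd : 1 ≤ d) (hdΔ : d ≤ Δ) (hΔ : 2 ≤ Δ) :
    π (d, Δ) = ∑ d' ∈ Icc 1 (N - 1),
      Pw N p d' d * (1 - ps * Aact n d' (Δ - d)) * π (d', Δ - d) := by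
  refine (hπ.hasSum_inflow_of_pos hd (by simp; omega)).unique
    (hasSum_prod_of_rows (fun x hx => ?_) fun d' _ => ?_)
  · rcases x with ⟨_ | d', c⟩
    · rw [K0_apply_of_ne_zero _ (by omega)]
      split_ifs with hc
      · rcases (by omega : 2 ≤ d ∨ d = 1) with hd2 | rfl
        · rw [Pw_zero_left hN hd2]; ring
        · rw [hπ.apply_zero_of_ne_zero (by simp at hc; omega)]; ring
      · ring
    · rw [hπ.2.1 _ (by simp at hx ⊢; omega), mul_zero]
  · convert hasSum_ite_eq (Δ - d) (Pw N p d' d * (1 - ps * Aact n d' (Δ - d)) * π (d', Δ - d))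
      using 2 with c
    rw [K0_apply_of_ne_zero _ (by omega)]
    split_ifs with h₁ h₂ h₂ <;> first | omega | (subst h₂; ring) | ring

theorem apply_of_lt_lB (hN : 3 ≤ N) {d Δ : ℕ} (hd : 1 ≤ d) (hΔ : Δ < lB d) :
    π (d, Δ) = 0 := by
  induction Δ using Nat.strong_induction_on generalizing d with
  | _ Δ ih =>
    rcases lt_or_ge Δ d with hlt | hge
    · exact hπ.apply_of_lt hd hlt
    obtain ⟨k, rfl⟩ : ∃ k, d = k + 1 := ⟨d - 1, by omega⟩
    have hk : 1 ≤ k := by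
      by_contra hk
      obtain rfl : k = 0 := by omega
      simp [lB] at hΔ; omega
    rw [lB_succ] at hΔ
    rw [hπ.apply_eq_sum hN hd hge (by omega)]
    refine sum_eq_zero fun d' hd' => ?_
    rcases lt_or_ge (d' + 1) (k + 1) with hfar | hnear
    · rw [Pw_eq_zero_of_add_one_lt hfar]; ring
    · have := lB_mono (show k ≤ d' by omega)
      rw [ih (Δ - (k + 1)) (by omega) (mem_Icc.1 hd').1 (by omega), mul_zero]

theorem hasSum_Pid (d τ : ℕ) : HasSum (fun j => π (d, j + τ)) (Pid π τ d) :=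
  (hπ.2.2.1.summable.comp_injective fun _ _ h => by simpa using h).hasSum

theorem tsum_add_eq {d m τ : ℕ} (hm : m ≤ τ) :
    ∑' j, π (d, j + m) = ∑ Δ ∈ Ico m τ, π (d, Δ) + Pid π τ d :=
  ((hπ.hasSum_Pid d τ).nat_add_Ico (f := fun Δ => π (d, Δ)) hm).tsum_eq

theorem hasSum_Aact_mul {τ : ℕ} (hτub : ∀ d ∈ Icc 1 (N - 1), n d ≤ τ) :
    HasSum (fun x => Aact n x.1 x.2 * π x)
      (∑ d ∈ Icc 1 (N - 1), (∑ Δ ∈ Ico (n d) τ, π (d, Δ) + Pid π τ d)) := by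
  refine hasSum_prod_of_rows (fun x hx => ?_) fun d hd => ?_
  · rcases x with ⟨_ | d, c⟩
    · rw [Aact_zero_left, zero_mul]
    · rw [hπ.2.1 _ (by simp at hx ⊢; omega), mul_zero]
  · have hd1 := (mem_Icc.1 hd).1
    rw [← hπ.tsum_add_eq (hτub d hd), ← hasSum_nat_add_iff' (n d),
      sum_eq_zero fun i hi => by rw [Aact_of_lt (mem_range.1 hi), zero_mul], sub_zero]
    simpa only [Aact_of_le hd1 (Nat.le_add_left _ _), one_mul]
      using (hπ.hasSum_Pid d (n d)).summable.hasSum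

theorem hasSum_idle_tail {d m τ : ℕ} (hd : 1 ≤ d) (hnd : n d ≤ τ) (hm : m ≤ τ) :
    HasSum (fun j => (1 - ps * Aact n d (j + m)) * π (d, j + m))
      (∑ Δ ∈ Ico m τ, (1 - ps * Aact n d Δ) * π (d, Δ) + (1 - ps) * Pid π τ d) := by
  refine HasSum.nat_add_Ico (f := fun Δ => (1 - ps * Aact n d Δ) * π (d, Δ)) hm ?_
  simpa only [Aact_of_le hd (hnd.trans (Nat.le_add_left _ _)), mul_one]
    using (hπ.hasSum_Pid d τ).mul_left (1 - ps)

theorem Pid_eq_sum (hN : 3 ≤ N) {τ : ℕ} (hτub : ∀ d ∈ Icc 1 (N - 1), n d ≤ τ) (hτ : 2 ≤ τ)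
    {d : ℕ} (hd : 1 ≤ d) :
    Pid π τ d = ∑ d' ∈ Icc 1 (N - 1), Pw N p d' d *
      (∑ Δ ∈ Ico (τ - d) τ, (1 - ps * Aact n d' Δ) * π (d', Δ) + (1 - ps) * Pid π τ d') := by
  -- shift the tail to start at `max τ d`, where the balance equations apply to every term
  have hshift : HasSum (fun j => π (d, j + (τ - d + d))) (∑ d' ∈ Icc 1 (N - 1), Pw N p d' d *
      (∑ Δ ∈ Ico (τ - d) τ, (1 - ps * Aact n d' Δ) * π (d', Δ) + (1 - ps) * Pid π τ d')) := by
    have hbal : ∀ j, π (d, j + (τ - d + d)) = ∑ d' ∈ Icc 1 (N - 1),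
        Pw N p d' d * ((1 - ps * Aact n d' (j + (τ - d))) * π (d', j + (τ - d))) := fun j => by
      rw [hπ.apply_eq_sum hN hd (by omega) (by omega), ← add_assoc, Nat.add_sub_cancel]
      exact sum_congr rfl fun _ _ => by ring
    simp only [hbal]
    exact hasSum_sum fun d' hd' =>
      (hπ.hasSum_idle_tail (mem_Icc.1 hd').1 (hτub d' hd') (Nat.sub_le τ d)).mul_left _
  have h := hshift.nat_add_Ico (f := fun Δ => π (d, Δ)) (show τ ≤ τ - d + d by omega)
  rw [sum_eq_zero fun Δ hΔ => hπ.apply_of_lt hd (by simp at hΔ; omega), zero_add] at h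
  exact h.tsum_eq

theorem apply_eq_of_hasSum_idle {τ : ℕ} (hτub : ∀ d ∈ Icc 1 (N - 1), n d ≤ τ) {y : ℕ × ℕ}
    {I : ℝ} (hidle : HasSum (fun x => (1 - ps * Aact n x.1 x.2) * K0 N p x y * π x) I) :
    π y = (ps * (1 - 2 * p) * (if y = (0, 0) then 1 else 0)
        + 2 * ps * p * (if y = (1, 1) then 1 else 0))
      * ∑ d ∈ Icc 1 (N - 1), (∑ Δ ∈ Ico (n d) τ, π (d, Δ) + Pid π τ d) + I := by
  have hK : (fun x => Kpol N p ps n x y * π x) = fun x =>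
      (ps * (1 - 2 * p) * (if y = (0, 0) then 1 else 0)
        + 2 * ps * p * (if y = (1, 1) then 1 else 0)) * (Aact n x.1 x.2 * π x)
      + (1 - ps * Aact n x.1 x.2) * K0 N p x y * π x := by
    funext x
    rw [Kpol_eq]
    ring
  have h := hπ.2.2.2 y
  rw [hK] at h
  exact h.unique (((hπ.hasSum_Aact_mul hτub).mul_left _).add hidle)

theorem hasSum_idle_zero_zero (hN : 3 ≤ N) {τ : ℕ} (hτub : ∀ d ∈ Icc 1 (N - 1), n d ≤ τ) :
    HasSum (fun x => (1 - ps * Aact n x.1 x.2) * K0 N p x (0, 0) * π x)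
      ((1 - 2 * p) * π (0, 0) + p * (∑ Δ ∈ Ico 1 τ, (1 - ps * Aact n 1 Δ) * π (1, Δ)
        + (1 - ps) * Pid π τ 1)) := by
  have h := hasSum_prod_of_rows (s := {0, 1})
    (f := fun x => (1 - ps * Aact n x.1 x.2) * K0 N p x (0, 0) * π x)
    (r := fun d => if d = 0 then (1 - 2 * p) * π (0, 0) else
      p * (∑ Δ ∈ Ico 1 τ, (1 - ps * Aact n 1 Δ) * π (1, Δ) + (1 - ps) * Pid π τ 1))
    (fun x hx => ?_) (fun d hd => ?_)
  · rwa [sum_pair zero_ne_one, if_pos rfl, if_neg one_ne_zero] at h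
  · simp only [mem_insert, mem_singleton] at hx
    simp [K0, Pw_zero_right hN (show 2 ≤ x.1 by omega)]
  · rcases mem_insert.1 hd with rfl | hd
    · rw [if_pos rfl]
      convert hasSum_ite_eq 0 ((1 - 2 * p) * π (0, 0)) using 2 with c
      split_ifs with hc
      · simp [hc, K0, Pw, Aact_zero_left]
      · rw [hπ.apply_zero_of_ne_zero hc, mul_zero]
    rw [mem_singleton.1 hd, if_neg one_ne_zero]
    have htail := hπ.hasSum_idle_tail le_rfl (hτub 1 (mem_Icc.2 ⟨le_rfl, by omega⟩)) τ.zero_le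
    simp only [add_zero] at htail
    rw [← sum_subset (Ico_subset_Ico_left zero_le_one) fun Δ h₁ h₂ => by
      rw [show Δ = 0 by simp at h₁ h₂; omega, hπ.apply_of_lt le_rfl zero_lt_one, mul_zero]]
      at htail
    simpa [K0, Pw_one_zero hN, mul_comm, mul_left_comm, mul_assoc] using htail.mul_left p

theorem hasSum_idle_one_one :
    HasSum (fun x => (1 - ps * Aact n x.1 x.2) * K0 N p x (1, 1) * π x) (2 * p * π (0, 0)) := by
  convert hasSum_ite_eq ((0, 0) : ℕ × ℕ) (2 * p * π (0, 0)) using 2 with x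
  rw [K0_apply_of_ne_zero _ one_ne_zero]
  by_cases hx : x = (0, 0)
  · simp [hx, Pw, Aact_zero_left]
  rw [if_neg hx]
  split_ifs with hc
  · obtain ⟨d, c⟩ := x
    obtain rfl : c = 0 := by simpa using hc
    rw [hπ.apply_of_lt (by simp at hx; omega) (by simp at hx; omega), mul_zero]
  · rw [mul_zero, zero_mul]

theorem sum_rows_add_apply_zero_zero_eq_one (hN : 3 ≤ N) (τ : ℕ) :
    ∑ d ∈ Icc 1 (N - 1), (∑ Δ ∈ Ico (lB d) τ, π (d, Δ) + Pid π τ d) + π (0, 0) = 1 := by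
  have h := hasSum_prod_of_rows (f := π) (s := insert 0 (Icc 1 (N - 1)))
    (r := fun d => if d = 0 then π (0, 0) else ∑ Δ ∈ Ico (lB d) τ, π (d, Δ) + Pid π τ d)
    (fun x hx => hπ.2.1 x (by simp at hx; omega)) (fun d hd => ?_)
  · rw [sum_insert (by simp), if_pos rfl,
      sum_congr rfl fun d hd => if_neg (by simp at hd; omega)] at h
    linarith [h.unique hπ.2.2.1]
  · split_ifs with h0
    · subst h0
      convert hasSum_ite_eq 0 (π (0, 0)) using 2 with c
      split_ifs with hc
      · rw [hc]
      · exact hπ.apply_zero_of_ne_zero hc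
    have hrow := (hπ.hasSum_Pid d τ).nat_add_Ico (f := fun Δ => π (d, Δ)) τ.zero_le
    simp only [add_zero] at hrow
    rwa [← sum_subset (Ico_subset_Ico_left (Nat.zero_le (lB d))) fun Δ h₁ h₂ =>
      hπ.apply_of_lt_lB hN (by simp at hd; omega) (by simp at h₁ h₂; omega)] at hrow

end IsStationaryPol

theorem expected_transmission_rate_finite_system_general
    (N : ℕ) (p ps : ℝ)
    (hN : 3 ≤ N)
    (n : ℕ → ℕ)
    (τ : ℕ) (hτub : ∀ d ∈ Finset.Icc 1 (N - 1), n d ≤ τ)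
    (hτ2 : 2 ≤ τ)
    (π : ℕ × ℕ → ℝ) (hπ : IsStationaryPol N p ps n π) :
    -- the expected transmission rate equals the finite expression
    (∑ d ∈ Finset.Icc 1 (N - 1), ∑' Δ : ℕ, π (d, Δ + n d))
      = ∑ d ∈ Finset.Icc 1 (N - 1),
          ((∑ Δ ∈ Finset.Ico (n d) τ, π (d, Δ)) + Pid π τ d) ∧
    -- (i) virtual states carry no mass
    (∀ d ∈ Finset.Icc 1 (N - 1), ∀ Δ : ℕ, Δ < lB d → π (d, Δ) = 0) ∧
    -- (ii) interior balance equations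
    (∀ d ∈ Finset.Icc 1 (N - 1), ∀ Δ : ℕ, max 2 (lB d) ≤ Δ → Δ ≤ τ - 1 →
      π (d, Δ) = ∑ d' ∈ Finset.Icc 1 (N - 1),
        Pw N p d' d * (1 - ps * Aact n d' (Δ - d)) * π (d', Δ - d)) ∧
    -- (iii) balance equations for the tail masses
    (∀ d ∈ Finset.Icc 1 (N - 1),
      Pid π τ d = ∑ d' ∈ Finset.Icc 1 (N - 1),
        Pw N p d' d *
          ((∑ Δ ∈ Finset.Ico (τ - d) τ, (1 - ps * Aact n d' Δ) * π (d', Δ))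
            + (1 - ps) * Pid π τ d')) ∧
    -- (iv) balance equation at (0,0)
    (π (0, 0) = (1 - 2 * p) * π (0, 0)
      + p * ∑ Δ ∈ Finset.Ico 1 τ, (1 - ps * Aact n 1 Δ) * π (1, Δ)
      + (1 - ps) * p * Pid π τ 1
      + ps * (1 - 2 * p) * ∑ d ∈ Finset.Icc 1 (N - 1),
          ((∑ Δ ∈ Finset.Ico (n d) τ, π (d, Δ)) + Pid π τ d)) ∧
    -- (v) balance equation at (1,1)
    (π (1, 1) = 2 * p * π (0, 0)
      + 2 * ps * p * ∑ d ∈ Finset.Icc 1 (N - 1),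
          ((∑ Δ ∈ Finset.Ico (n d) τ, π (d, Δ)) + Pid π τ d)) ∧
    -- (vi) normalization
    ((∑ d ∈ Finset.Icc 1 (N - 1),
        ((∑ Δ ∈ Finset.Ico (lB d) τ, π (d, Δ)) + Pid π τ d)) + π (0, 0) = 1) := by
  have hd1 {d : ℕ} (hd : d ∈ Icc 1 (N - 1)) : 1 ≤ d := (mem_Icc.1 hd).1
  refine ⟨sum_congr rfl fun d hd => hπ.tsum_add_eq (hτub d hd),
    fun d hd Δ hΔ => hπ.apply_of_lt_lB hN (hd1 hd) hΔ,
    fun d hd Δ hΔ _ => ?_, fun d hd => hπ.Pid_eq_sum hN hτub hτ2 (hd1 hd), ?_, ?_,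
    hπ.sum_rows_add_apply_zero_zero_eq_one hN τ⟩
  · have hlB := self_le_lB d
    rw [hπ.apply_eq_sum hN (hd1 hd) (by omega) (by omega)]
  · have h := hπ.apply_eq_of_hasSum_idle hτub (hπ.hasSum_idle_zero_zero hN hτub)
    norm_num at h
    linear_combination h
  · have h := hπ.apply_eq_of_hasSum_idle hτub hπ.hasSum_idle_one_one
    norm_num at h
    linear_combination h

/-- expected transmission rate: the finite balance system. -/
theorem expected_transmission_rate_finite_system
    (N : ℕ) (p ps : ℝ)
    (hN : 3 ≤ N) (hp0 : 0 ≤ p) (hp1 : p ≤ 1 / 3)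
    (hps0 : 0 < ps) (hps1 : ps ≤ 1)
    (n : ℕ → ℕ) (hn : ∀ d, 1 ≤ d → d ≤ N - 1 → 1 ≤ n d)
    (τ : ℕ) (hτub : ∀ d ∈ Finset.Icc 1 (N - 1), n d ≤ τ)
    (hτmem : ∃ d ∈ Finset.Icc 1 (N - 1), n d = τ) (hτ2 : 2 ≤ τ)
    (π : ℕ × ℕ → ℝ) (hπ : IsStationaryPol N p ps n π) :
    -- the expected transmission rate equals the finite expression
    (∑ d ∈ Finset.Icc 1 (N - 1), ∑' Δ : ℕ, π (d, Δ + n d))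
      = ∑ d ∈ Finset.Icc 1 (N - 1),
          ((∑ Δ ∈ Finset.Ico (n d) τ, π (d, Δ)) + Pid π τ d) ∧
    -- (i) virtual states carry no mass
    (∀ d ∈ Finset.Icc 1 (N - 1), ∀ Δ : ℕ, Δ < lB d → π (d, Δ) = 0) ∧
    -- (ii) interior balance equations
    (∀ d ∈ Finset.Icc 1 (N - 1), ∀ Δ : ℕ, max 2 (lB d) ≤ Δ → Δ ≤ τ - 1 →
      π (d, Δ) = ∑ d' ∈ Finset.Icc 1 (N - 1),
        Pw N p d' d * (1 - ps * Aact n d' (Δ - d)) * π (d', Δ - d)) ∧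
    -- (iii) balance equations for the tail masses
    (∀ d ∈ Finset.Icc 1 (N - 1),
      Pid π τ d = ∑ d' ∈ Finset.Icc 1 (N - 1),
        Pw N p d' d *
          ((∑ Δ ∈ Finset.Ico (τ - d) τ, (1 - ps * Aact n d' Δ) * π (d', Δ))
            + (1 - ps) * Pid π τ d')) ∧
    -- (iv) balance equation at (0,0)
    (π (0, 0) = (1 - 2 * p) * π (0, 0)
      + p * ∑ Δ ∈ Finset.Ico 1 τ, (1 - ps * Aact n 1 Δ) * π (1, Δ)
      + (1 - ps) * p * Pid π τ 1
      + ps * (1 - 2 * p) * ∑ d ∈ Finset.Icc 1 (N - 1),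
          ((∑ Δ ∈ Finset.Ico (n d) τ, π (d, Δ)) + Pid π τ d)) ∧
    -- (v) balance equation at (1,1)
    (π (1, 1) = 2 * p * π (0, 0)
      + 2 * ps * p * ∑ d ∈ Finset.Icc 1 (N - 1),
          ((∑ Δ ∈ Finset.Ico (n d) τ, π (d, Δ)) + Pid π τ d)) ∧
    -- (vi) normalization
    ((∑ d ∈ Finset.Icc 1 (N - 1),
        ((∑ Δ ∈ Finset.Ico (lB d) τ, π (d, Δ)) + Pid π τ d)) + π (0, 0) = 1) :=
  expected_transmission_rate_finite_system_general N p ps hN n τ hτub hτ2 π hπ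
end
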